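/- arXiv:2202.07480 — 2 statements merged into one kernel-verified Lean document; each statement's English description precedes it below -/
import Mathlib

section
/- Let ⟨G, Eℓ⟩ be a two-player game graph with live edges, Q ⊆ V, and F = {F_1, …, F_s} a family of subsets of V. Define Z* := νY. ⋂_{b=1}^{s} μ X_b. ( Q ∩ [ (F_b ∩ Cpre(Y)) ∪ Apre(Y, X_b) ] ) and Z̃* := νỸ. ⋂_{b=1}^{s} ν Ỹ_b. μ X̃_b. ( Q ∩ [ (F_b ∩ Cpre(Ỹ)) ∪ Apre(Ỹ_b, X̃_b) ] ). Then Z̃* = Z*. -/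
/-- Least fixed point of a set transformer (Knaster–Tarski form). -/
def lfpSet {V : Type*} (f : Set V → Set V) : Set V := sInf {X | f X ⊆ X}

/-- Greatest fixed point of a set transformer (Knaster–Tarski form). -/
def gfpSet {V : Type*} (f : Set V → Set V) : Set V := sSup {X | X ⊆ f X}

/-- A two-player game graph with live edges: vertices are partitioned into
Player-0 vertices `V0` and Player-1 vertices `V1`, every vertex has a successor,
and live edges `El` are Player-1 edges. -/
structure LiveGameGraph (V : Type*) where
  V0 : Set V
  V1 : Set V
  E : V → V → Prop
  El : V → V → Prop
  cover : V0 ∪ V1 = Set.univ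
  disj : V0 ∩ V1 = ∅
  succ_nonempty : ∀ v : V, ∃ w, E v w
  live_sub : ∀ v w, El v w → v ∈ V1 ∧ E v w

namespace LiveGameGraph

variable {V : Type*}

/-- Pre∃0(S) -/
def pre0 (Gm : LiveGameGraph V) (S : Set V) : Set V :=
  {v | v ∈ Gm.V0 ∧ ∃ w, Gm.E v w ∧ w ∈ S}

/-- Pre∀1(S) -/
def pre1 (Gm : LiveGameGraph V) (S : Set V) : Set V :=
  {v | v ∈ Gm.V1 ∧ ∀ w, Gm.E v w → w ∈ S}

/-- Cpre(S) -/
def cpre (Gm : LiveGameGraph V) (S : Set V) : Set V := Gm.pre0 S ∪ Gm.pre1 S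

/-- Lpre∃(T) -/
def lpre (Gm : LiveGameGraph V) (T : Set V) : Set V :=
  {v | ∃ w, Gm.El v w ∧ w ∈ T}

/-- Apre(S,T) -/
def apre (Gm : LiveGameGraph V) (S T : Set V) : Set V :=
  Gm.cpre T ∪ (Gm.lpre T ∩ Gm.pre1 S)

lemma pre0_mono (Gm : LiveGameGraph V) {S T : Set V} (h : S ⊆ T) : Gm.pre0 S ⊆ Gm.pre0 T := by
  rintro v ⟨hv, w, hw, hwS⟩; exact ⟨hv, w, hw, h hwS⟩

lemma pre1_mono (Gm : LiveGameGraph V) {S T : Set V} (h : S ⊆ T) : Gm.pre1 S ⊆ Gm.pre1 T := by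
  rintro v ⟨hv, hall⟩; exact ⟨hv, fun w hw => h (hall w hw)⟩

lemma cpre_mono (Gm : LiveGameGraph V) {S T : Set V} (h : S ⊆ T) : Gm.cpre S ⊆ Gm.cpre T :=
  Set.union_subset_union (Gm.pre0_mono h) (Gm.pre1_mono h)

lemma lpre_mono (Gm : LiveGameGraph V) {S T : Set V} (h : S ⊆ T) : Gm.lpre S ⊆ Gm.lpre T := by
  rintro v ⟨w, hw, hwS⟩; exact ⟨w, hw, h hwS⟩

lemma apre_mono (Gm : LiveGameGraph V) {S S' T T' : Set V} (hS : S ⊆ S') (hT : T ⊆ T') :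
    Gm.apre S T ⊆ Gm.apre S' T' :=
  Set.union_subset_union (Gm.cpre_mono hT)
    (Set.inter_subset_inter (Gm.lpre_mono hT) (Gm.pre1_mono hS))

end LiveGameGraph

section KT

variable {V : Type*}

lemma lfpSet_le {f : Set V → Set V} {S : Set V} (h : f S ⊆ S) : lfpSet f ⊆ S :=
  sInf_le h

lemma le_gfpSet {f : Set V → Set V} {S : Set V} (h : S ⊆ f S) : S ⊆ gfpSet f :=
  le_sSup h

lemma lfpSet_fix {f : Set V → Set V} (hf : ∀ {A B : Set V}, A ⊆ B → f A ⊆ f B) :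
    f (lfpSet f) = lfpSet f := by
  have h1 : f (lfpSet f) ⊆ lfpSet f := by
    apply le_sInf
    intro X hX
    exact (hf (sInf_le hX)).trans hX
  exact le_antisymm h1 (sInf_le (hf h1))

lemma gfpSet_fix {f : Set V → Set V} (hf : ∀ {A B : Set V}, A ⊆ B → f A ⊆ f B) :
    f (gfpSet f) = gfpSet f := by
  have h1 : gfpSet f ⊆ f (gfpSet f) := by
    apply sSup_le
    intro X hX
    exact hX.trans (hf (le_sSup hX))
  exact le_antisymm (le_sSup (hf h1)) h1

lemma lfpSet_mono {f g : Set V → Set V} (h : ∀ X, f X ⊆ g X) : lfpSet f ⊆ lfpSet g := by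
  apply le_sInf
  intro X hX
  exact sInf_le ((h X).trans hX)

lemma gfpSet_mono {f g : Set V → Set V} (h : ∀ X, f X ⊆ g X) : gfpSet f ⊆ gfpSet g := by
  apply sSup_le
  intro X hX
  exact le_sSup (hX.trans (h X))

/-- Monotonicity of the generalized-Büchi body in all three set arguments. -/
lemma body_mono (Gm : LiveGameGraph V) (Q Fb : Set V) {Y Y' S S' X X' : Set V}
    (hY : Y ⊆ Y') (hS : S ⊆ S') (hX : X ⊆ X') :
    Q ∩ ((Fb ∩ Gm.cpre Y) ∪ Gm.apre S X) ⊆ Q ∩ ((Fb ∩ Gm.cpre Y') ∪ Gm.apre S' X') :=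
  Set.inter_subset_inter_right _
    (Set.union_subset_union (Set.inter_subset_inter_right _ (Gm.cpre_mono hY))
      (Gm.apre_mono hS hX))

end KT

/-- Z* = Z̃* for the two generalized-Büchi fixpoints. -/
theorem gen_buchi_fixpoint_eq {V : Type*} [Fintype V]
    (Gm : LiveGameGraph V) (Q : Set V) (s : ℕ) (F : ℕ → Set V) :
    (gfpSet fun Yt => ⋂ b ∈ Finset.Icc 1 s, gfpSet fun Yb => lfpSet fun Xb =>
      Q ∩ ((F b ∩ Gm.cpre Yt) ∪ Gm.apre Yb Xb)) =
    (gfpSet fun Y => ⋂ b ∈ Finset.Icc 1 s, lfpSet fun X =>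
      Q ∩ ((F b ∩ Gm.cpre Y) ∪ Gm.apre Y X)) := by
  classical
  set g3 : Set V → Set V := fun Yt => ⋂ b ∈ Finset.Icc 1 s, gfpSet fun Yb => lfpSet fun Xb =>
      Q ∩ ((F b ∩ Gm.cpre Yt) ∪ Gm.apre Yb Xb) with hg3
  set g2 : Set V → Set V := fun Y => ⋂ b ∈ Finset.Icc 1 s, lfpSet fun X =>
      Q ∩ ((F b ∩ Gm.cpre Y) ∪ Gm.apre Y X) with hg2
  have hmono2 : ∀ {A B : Set V}, A ⊆ B → g2 A ⊆ g2 B := by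
    intro A B hAB
    refine Set.iInter₂_mono fun c hc => lfpSet_mono fun X => ?_
    exact body_mono Gm Q (F c) hAB hAB subset_rfl
  have hmono3 : ∀ {A B : Set V}, A ⊆ B → g3 A ⊆ g3 B := by
    intro A B hAB
    refine Set.iInter₂_mono fun c hc => gfpSet_mono fun S => lfpSet_mono fun X => ?_
    exact body_mono Gm Q (F c) hAB subset_rfl subset_rfl
  set Z3 : Set V := gfpSet g3 with hZ3
  set Z2 : Set V := gfpSet g2 with hZ2
  -- inner gfp's at the 3-nested fixpoint
  set W : ℕ → Set V := fun b => gfpSet fun Yb => lfpSet fun Xb =>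
      Q ∩ ((F b ∩ Gm.cpre Z3) ∪ Gm.apre Yb Xb) with hW
  have hZ3fix : g3 Z3 = Z3 := gfpSet_fix hmono3
  have hZ3eq : Z3 = ⋂ b ∈ Finset.Icc 1 s, W b := hZ3fix.symm
  have hZ3subW : ∀ b ∈ Finset.Icc 1 s, Z3 ⊆ W b := by
    intro b hb
    rw [hZ3eq]
    exact Set.iInter₂_subset b hb
  have hWfix : ∀ b, (lfpSet fun X => Q ∩ ((F b ∩ Gm.cpre Z3) ∪ Gm.apre (W b) X)) = W b := by
    intro b
    exact gfpSet_fix (f := fun S => lfpSet fun X => Q ∩ ((F b ∩ Gm.cpre Z3) ∪ Gm.apre S X))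
      (fun {A B} hAB => lfpSet_mono fun X => body_mono Gm Q (F b) subset_rfl hAB subset_rfl)
  -- Key lemma: if all W b ⊆ Y, then each W b is below each 2-nested inner lfp at Y.
  have lemA : ∀ (Y : Set V), (∀ b ∈ Finset.Icc 1 s, W b ⊆ Y) →
      ∀ c ∈ Finset.Icc 1 s, ∀ b ∈ Finset.Icc 1 s,
        W b ⊆ lfpSet fun X => Q ∩ ((F c ∩ Gm.cpre Y) ∪ Gm.apre Y X) := by
    intro Y hWY c hc b hb
    set N : Set V := lfpSet fun X => Q ∩ ((F c ∩ Gm.cpre Y) ∪ Gm.apre Y X) with hNdef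
    have hNmono : ∀ {A B : Set V}, A ⊆ B →
        Q ∩ ((F c ∩ Gm.cpre Y) ∪ Gm.apre Y A) ⊆ Q ∩ ((F c ∩ Gm.cpre Y) ∪ Gm.apre Y B) :=
      fun hAB => body_mono Gm Q (F c) subset_rfl subset_rfl hAB
    have hNfix : (Q ∩ ((F c ∩ Gm.cpre Y) ∪ Gm.apre Y N)) = N := lfpSet_fix hNmono
    have hZ3Y : Z3 ⊆ Y := (hZ3subW c hc).trans (hWY c hc)
    have hWcN : W c ⊆ N := by
      rw [← hWfix c]
      exact lfpSet_mono fun X => body_mono Gm Q (F c) hZ3Y (hWY c hc) subset_rfl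
    have hZ3N : Z3 ⊆ N := (hZ3subW c hc).trans hWcN
    rw [← hWfix b]
    apply lfpSet_le
    intro v hv
    rw [← hNfix]
    obtain ⟨hvQ, hv2⟩ := hv
    refine ⟨hvQ, ?_⟩
    rcases hv2 with ⟨_, hvC⟩ | hvA
    · exact Or.inr (Or.inl (Gm.cpre_mono hZ3N hvC))
    · rcases hvA with hvC | ⟨hvL, hvP⟩
      · exact Or.inr (Or.inl hvC)
      · exact Or.inr (Or.inr ⟨hvL, Gm.pre1_mono (hWY b hb) hvP⟩)
  -- finite iteration of g2 from ⊤
  have hiter : ∀ n : ℕ, (∀ b ∈ Finset.Icc 1 s, W b ⊆ g2^[n] Set.univ) ∧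
      Z3 ⊆ g2^[n] Set.univ := by
    intro n
    induction n with
    | zero => simp
    | succ n ih =>
      rw [Function.iterate_succ_apply']
      constructor
      · intro b hb
        refine Set.subset_iInter₂ fun c hc => ?_
        exact lemA _ ih.1 c hc b hb
      · refine Set.subset_iInter₂ fun c hc => ?_
        exact (hZ3subW c hc).trans (lemA _ ih.1 c hc c hc)
  have hanti : ∀ n : ℕ, g2^[n + 1] Set.univ ⊆ g2^[n] Set.univ := by
    intro n
    induction n with
    | zero => simp
    | succ n ih =>
      rw [Function.iterate_succ_apply' g2 (n + 1)]
      exact (hmono2 ih).trans (Function.iterate_succ_apply' g2 n Set.univ).symm.subset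
  have hantile : ∀ m n : ℕ, m ≤ n → g2^[n] Set.univ ⊆ g2^[m] Set.univ := by
    intro m n hmn
    induction hmn with
    | refl => exact subset_rfl
    | step _ ih => exact (hanti _).trans ih
  have hstab : ∃ n : ℕ, g2^[n + 1] Set.univ = g2^[n] Set.univ := by
    obtain ⟨m, n, hmn, heq⟩ :=
      Finite.exists_ne_map_eq_of_infinite (fun k : ℕ => g2^[k] Set.univ)
    rcases Nat.lt_or_ge m n with h | h
    · refine ⟨m, le_antisymm (hanti m) ?_⟩
      calc g2^[m] Set.univ = g2^[n] Set.univ := heq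
        _ ⊆ g2^[m + 1] Set.univ := hantile _ _ h
    · have h' : n < m := by omega
      refine ⟨n, le_antisymm (hanti n) ?_⟩
      calc g2^[n] Set.univ = g2^[m] Set.univ := heq.symm
        _ ⊆ g2^[n + 1] Set.univ := hantile _ _ (by omega)
  obtain ⟨n, hn⟩ := hstab
  have h32 : Z3 ⊆ Z2 := by
    rw [Function.iterate_succ_apply'] at hn
    have hfixn : g2 (g2^[n] Set.univ) = g2^[n] Set.univ := hn
    exact (hiter n).2.trans (le_gfpSet hfixn.symm.subset)
  have h23 : Z2 ⊆ Z3 := by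
    have hZ2fix : g2 Z2 = Z2 := gfpSet_fix hmono2
    refine le_gfpSet ?_
    refine Set.subset_iInter₂ fun b hb => ?_
    refine le_gfpSet (f := fun Yb => lfpSet fun Xb =>
      Q ∩ ((F b ∩ Gm.cpre Z2) ∪ Gm.apre Yb Xb)) ?_
    calc Z2 = g2 Z2 := hZ2fix.symm
      _ ⊆ lfpSet fun X => Q ∩ ((F b ∩ Gm.cpre Z2) ∪ Gm.apre Z2 X) := Set.iInter₂_subset b hb
  exact le_antisymm h32 h23
end

section
/- Let ⟨G, Eℓ⟩ be a two-player game graph with live edges and let R = {(G_1, R_1), …, (G_k, R_k)} be a Rabin chain condition, i.e. a Rabin condition satisfying R_1 ⊇ R_2 ⊇ … ⊇ R_k and G_1 ⊇ G_2 ⊇ … ⊇ G_k. With G_0 := ∅ and R_0 := ∅, define Z* := νY_0. μX_0. νY_k. μX_k. νY_{k−1}. μX_{k−1}. ⋯ νY_1. μX_1. ⋃_{j=0}^{k} C̃_j, where C̃_j := (V ∖ R_j) ∩ [ (G_j ∩ Cpre(Y_j)) ∪ Apre(Y_j, X_j) ]. Then Z* equals the winning region W of Player 0 in the fair adversarial game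 over ⟨G, Eℓ⟩ for the Rabin winning condition φ = ⋁_{j=1}^{k} ( ◇□(V∖R_j) ∧ □◇G_j ). Moreover, there exists a memoryless Player-0 strategy that wins the fair adversarial game for φ from every vertex of Z*. -/
namespace LiveGameGraph

variable {V : Type*}

/-- A play is strongly transition fair if every live edge whose source is visited
infinitely often is itself taken infinitely often. -/
def StronglyFair (Gm : LiveGameGraph V) (π : ℕ → V) : Prop :=
  ∀ v w, Gm.El v w → {i | π i = v}.Infinite → {i | π i = v ∧ π (i + 1) = w}.Infinite

/-- A Player-0 strategy: given the history (the prefix before the current vertex)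
and the current vertex, it chooses an `E`-successor whenever the current vertex
belongs to Player 0. -/
def Strategy0 (Gm : LiveGameGraph V) (ρ : List V → V → V) : Prop :=
  ∀ h v, v ∈ Gm.V0 → Gm.E v (ρ h v)

/-- A Player-1 strategy. -/
def Strategy1 (Gm : LiveGameGraph V) (ρ : List V → V → V) : Prop :=
  ∀ h v, v ∈ Gm.V1 → Gm.E v (ρ h v)

/-- The play compliant with the strategies `ρ0` and `ρ1` starting at `v0`. -/
def Compliant (Gm : LiveGameGraph V) (ρ0 ρ1 : List V → V → V) (v0 : V)
    (π : ℕ → V) : Prop :=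
  π 0 = v0 ∧ ∀ i : ℕ,
    (π i ∈ Gm.V0 → π (i + 1) = ρ0 (List.ofFn fun j : Fin i => π j.1) (π i)) ∧
    (π i ∈ Gm.V1 → π (i + 1) = ρ1 (List.ofFn fun j : Fin i => π j.1) (π i))

/-- Player 0 wins the fair adversarial game for the winning condition `φ`
from `v0` using the strategy `ρ0`. -/
def WinsFrom (Gm : LiveGameGraph V) (φ : (ℕ → V) → Prop)
    (ρ0 : List V → V → V) (v0 : V) : Prop :=
  Gm.Strategy0 ρ0 ∧ ∀ ρ1, Gm.Strategy1 ρ1 → ∀ π, Gm.Compliant ρ0 ρ1 v0 π →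
    (Gm.StronglyFair π → φ π)

/-- The winning region of Player 0 in the fair adversarial game for `φ`. -/
def WinningRegion (Gm : LiveGameGraph V) (φ : (ℕ → V) → Prop) : Set V :=
  {v0 | ∃ ρ0, Gm.WinsFrom φ ρ0 v0}

end LiveGameGraph

namespace LiveGameGraph

variable {V : Type*}

/-- The chain fixpoint νY_k.μX_k. … νY_1.μX_1 peeled off one index at a time,
from index `j` down to index `1`; `acc` is the union of the `C̃` terms for the
already-bound indices (with their bound `Y`/`X` values substituted in). -/
def chainAux (Gm : LiveGameGraph V) (Gp Rp : ℕ → Set V) : ℕ → Set V → Set V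
  | 0, acc => acc
  | j + 1, acc =>
      gfpSet fun Y => lfpSet fun X =>
        Gm.chainAux Gp Rp j
          (acc ∪ ((Rp (j + 1))ᶜ ∩ ((Gp (j + 1) ∩ Gm.cpre Y) ∪ Gm.apre Y X)))

/-- The full chain fixpoint Z̃* = νY_0.μX_0.νY_k.μX_k. … νY_1.μX_1. ⋃_j C̃_j for
pairs (G_1,R_1),…,(G_k,R_k), with the artificial pair G_0 = ∅, R_0 = ∅. -/
def chainZ (Gm : LiveGameGraph V) (Gp Rp : ℕ → Set V) (k : ℕ) : Set V :=
  gfpSet fun Y0 => lfpSet fun X0 =>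
    Gm.chainAux Gp Rp k
      (((∅ : Set V)ᶜ) ∩ (((∅ : Set V) ∩ Gm.cpre Y0) ∪ Gm.apre Y0 X0))

end LiveGameGraph

/-!
A vertex `v` of the chain fixpoint is assigned, at every level, the stage at which it enters the
least fixpoint in `X` once the fixpoints outside are unfolded; read from the outermost level
inwards these stages form a lexicographic code, and `v` lies in a term `C̃_{m+1}` whose arguments
are stages of this unfolding. Player 0 moves into that `X` when possible and into that `Y`
otherwise. No step then increases the code above level `m`, and steps into `X`, chosen by Player 0
or taken infinitely often by fairness of a live edge, decrease it at level `m`. Descending from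
the outermost level, the code at the current level is thus constant on the vertices visited
infinitely often, which forces either one of them into `G` at that level or all of them to be
derived at lower levels. This yields a pair whose `G` is visited infinitely often while every
later vertex avoids the `R` of its own level, which is at most that of the pair; the `R_j` being a
chain, it avoids the `R` of the pair.

Dually, a vertex outside the chain fixpoint gets a code from the stages at which it leaves the
greatest fixpoints in `Y`. At every other visit Player 1 escapes from the current stage of `Y` at
the highest pair on which it has to act, and at the other visits it cycles through the live
edges. The resulting play is strongly transition fair, and the same descent shows that each pair
has its `R` visited, or its `G` avoided, infinitely often.
-/

/-! ### Fixpoint iteration and lexicographic codes -/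

section Fixpoints

open Set

variable {V : Type*} {f f' : Set V → Set V}

theorem lfpSet_subset {S : Set V} (h : f S ⊆ S) : lfpSet f ⊆ S := sInf_le h

theorem map_lfpSet (hf : Monotone f) : f (lfpSet f) = lfpSet f :=
  OrderHom.map_lfp (⟨f, hf⟩ : Set V →o Set V)

theorem map_gfpSet (hf : Monotone f) : f (gfpSet f) = gfpSet f :=
  OrderHom.map_gfp (⟨f, hf⟩ : Set V →o Set V)

theorem lfpSet_mono_s13 (h : ∀ S, f S ⊆ f' S) : lfpSet f ⊆ lfpSet f' :=
  sInf_le_sInf fun _ hX => (h _).trans hX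

theorem gfpSet_mono_s13 (h : ∀ S, f S ⊆ f' S) : gfpSet f ⊆ gfpSet f' :=
  sSup_le_sSup fun _ hX => hX.trans (h _)

theorem iterate_subset_lfpSet (hf : Monotone f) (n : ℕ) : f^[n] ∅ ⊆ lfpSet f := by
  induction n with
  | zero => exact empty_subset _
  | succ n ih =>
    rw [Function.iterate_succ_apply']
    exact (hf ih).trans (map_lfpSet hf).le

theorem gfpSet_subset_iterate (hf : Monotone f) (n : ℕ) : gfpSet f ⊆ f^[n] univ := by
  induction n with
  | zero => exact subset_univ _
  | succ n ih =>
    rw [Function.iterate_succ_apply']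
    exact (map_gfpSet hf).ge.trans (hf ih)

theorem exists_le_card_succ_eq_of_monotone [Fintype V] {s : ℕ → Set V} (hs : Monotone s) :
    ∃ n ≤ Fintype.card V, s (n + 1) = s n := by
  by_contra! hne
  have hcard : ∀ n ≤ Fintype.card V + 1, n ≤ (s n).ncard := by
    intro n hn
    induction n with
    | zero => exact Nat.zero_le _
    | succ n ih =>
      have hssub : s n ⊂ s (n + 1) :=
        ssubset_of_subset_of_ne (hs n.le_succ) (hne n (by omega)).symm
      have := ncard_lt_ncard hssub (toFinite _)
      have := ih (by omega)
      omega
  have := (hcard _ le_rfl).trans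
    ((ncard_le_ncard (subset_univ (s (Fintype.card V + 1)))).trans_eq (ncard_univ V))
  rw [Nat.card_eq_fintype_card] at this
  omega

theorem iterate_card_eq_of_isFixedPt [Fintype V] {x : Set V} {n : ℕ}
    (hn : n ≤ Fintype.card V) (hfix : Function.IsFixedPt f (f^[n] x)) :
    f^[Fintype.card V] x = f^[n] x := by
  rw [← Nat.sub_add_cancel hn, Function.iterate_add_apply, hfix.iterate]

theorem lfpSet_eq_iterate_card [Fintype V] (hf : Monotone f) :
    lfpSet f = f^[Fintype.card V] ∅ := by
  obtain ⟨n, hn, hfix⟩ :=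
    exists_le_card_succ_eq_of_monotone (hf.monotone_iterate_of_le_map (empty_subset _))
  rw [Function.iterate_succ_apply'] at hfix
  rw [iterate_card_eq_of_isFixedPt hn hfix]
  exact (lfpSet_subset hfix.le).antisymm (iterate_subset_lfpSet hf n)

theorem gfpSet_eq_iterate_card [Fintype V] (hf : Monotone f) :
    gfpSet f = f^[Fintype.card V] univ := by
  have hanti := hf.antitone_iterate_of_map_le (subset_univ (f univ))
  obtain ⟨n, hn, hfix⟩ := exists_le_card_succ_eq_of_monotone
    (s := fun n => (f^[n] univ)ᶜ) fun _ _ h => compl_subset_compl.2 (hanti h)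
  rw [compl_inj_iff, Function.iterate_succ_apply'] at hfix
  rw [iterate_card_eq_of_isFixedPt hn hfix]
  exact (gfpSet_subset_iterate hf n).antisymm (le_sSup hfix.ge)

end Fixpoints

section LexCode

/-- The digits `d ℓ, …, d (K - 1)` read as a numeral in base `B + 1`, the most significant
digit being `d (K - 1)`. For digits bounded by `B` this orders digit strings lexicographically
from the top. -/
def lexCode (K B : ℕ) (d : ℕ → ℕ) (ℓ : ℕ) : ℕ :=
  if K ≤ ℓ then 0 else lexCode K B d (ℓ + 1) * (B + 1) + d ℓ
termination_by K - ℓ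

variable {K B ℓ : ℕ} {d d' : ℕ → ℕ}

theorem lexCode_of_le (h : K ≤ ℓ) : lexCode K B d ℓ = 0 := by
  rw [lexCode, if_pos h]

theorem lexCode_of_lt (h : ℓ < K) :
    lexCode K B d ℓ = lexCode K B d (ℓ + 1) * (B + 1) + d ℓ := by
  rw [lexCode, if_neg (by omega)]

theorem lexCode_lt_mul_of_succ_lt (h : ℓ < K) (hd : d ℓ ≤ B) {c : ℕ}
    (hlt : lexCode K B d (ℓ + 1) < c) : lexCode K B d ℓ < c * (B + 1) := by
  rw [lexCode_of_lt h]
  nlinarith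

theorem lexCode_le_of_le_of_le (hd' : ∀ i, d' i ≤ B) {ℓ' : ℕ} (hℓ : ℓ ≤ ℓ')
    (hle : lexCode K B d ℓ ≤ lexCode K B d' ℓ) : lexCode K B d ℓ' ≤ lexCode K B d' ℓ' := by
  induction ℓ', hℓ using Nat.le_induction with
  | base => exact hle
  | succ m _ ih =>
    by_contra! hlt
    by_cases hm : m < K
    · rw [lexCode_of_lt (d := d) hm] at ih
      have := lexCode_lt_mul_of_succ_lt hm (hd' m) hlt
      omega
    · rw [lexCode_of_le (by omega), lexCode_of_le (by omega)] at hlt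
      exact hlt.false

end LexCode

namespace LiveGameGraph

open Set

variable {V : Type*} (Gm : LiveGameGraph V)

theorem mem_V1_iff {v : V} : v ∈ Gm.V1 ↔ v ∉ Gm.V0 := by
  have hcover : v ∈ Gm.V0 ∪ Gm.V1 := Gm.cover ▸ mem_univ v
  have hdisj : v ∉ Gm.V0 ∩ Gm.V1 := Gm.disj ▸ notMem_empty v
  exact ⟨fun h1 h0 => hdisj ⟨h0, h1⟩, hcover.resolve_left⟩

theorem notMem_lpre_of_mem_V0 {v : V} (h0 : v ∈ Gm.V0) (S : Set V) : v ∉ Gm.lpre S :=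
  fun ⟨w, hw, _⟩ => (Gm.mem_V1_iff.1 (Gm.live_sub v w hw).1) h0

variable {Gm} {S S' X X' Y Y' : Set V} {v w : V}

theorem exists_edge_of_mem_cpre (h0 : v ∈ Gm.V0) (h : v ∈ Gm.cpre S) : ∃ w, Gm.E v w ∧ w ∈ S :=
  h.elim (fun h => h.2) fun h => absurd h0 (Gm.mem_V1_iff.1 h.1)

theorem mem_of_mem_cpre (h1 : v ∈ Gm.V1) (h : v ∈ Gm.cpre S) (he : Gm.E v w) : w ∈ S :=
  h.elim (fun h => absurd h.1 (Gm.mem_V1_iff.1 h1)) fun h => h.2 w he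

theorem exists_edge_notMem_of_notMem_pre1 (h1 : v ∈ Gm.V1) (h : v ∉ Gm.pre1 S) :
    ∃ w, Gm.E v w ∧ w ∉ S := by
  by_contra! hall
  exact h ⟨h1, hall⟩

theorem notMem_of_notMem_pre0 (h0 : v ∈ Gm.V0) (h : v ∉ Gm.pre0 S) (he : Gm.E v w) : w ∉ S :=
  fun hw => h ⟨h0, w, he, hw⟩

theorem pre0_mono_s13 (h : S ⊆ S') : Gm.pre0 S ⊆ Gm.pre0 S' :=
  fun _ ⟨h0, w, he, hw⟩ => ⟨h0, w, he, h hw⟩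

theorem pre1_mono_s13 (h : S ⊆ S') : Gm.pre1 S ⊆ Gm.pre1 S' :=
  fun _ ⟨h1, hall⟩ => ⟨h1, fun w hw => h (hall w hw)⟩

theorem cpre_mono_s13 (h : S ⊆ S') : Gm.cpre S ⊆ Gm.cpre S' :=
  union_subset_union (pre0_mono_s13 h) (pre1_mono_s13 h)

theorem lpre_mono_s13 (h : S ⊆ S') : Gm.lpre S ⊆ Gm.lpre S' :=
  fun _ ⟨w, he, hw⟩ => ⟨w, he, h hw⟩

theorem apre_mono_s13 (hY : Y ⊆ Y') (hX : X ⊆ X') : Gm.apre Y X ⊆ Gm.apre Y' X' :=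
  union_subset_union (cpre_mono_s13 hX) (inter_subset_inter (lpre_mono_s13 hX) (pre1_mono_s13 hY))

open Classical in
variable (Gm) in
noncomputable def moveOutside (v : V) (S : Set V) : V :=
  if h : ∃ w, Gm.E v w ∧ w ∉ S then h.choose else (Gm.succ_nonempty v).choose

theorem edge_moveOutside (v : V) (S : Set V) : Gm.E v (Gm.moveOutside v S) := by
  unfold moveOutside
  split_ifs with h
  · exact h.choose_spec.1
  · exact (Gm.succ_nonempty v).choose_spec

theorem moveOutside_notMem (h : ∃ w, Gm.E v w ∧ w ∉ S) : Gm.moveOutside v S ∉ S := by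
  rw [moveOutside, dif_pos h]
  exact h.choose_spec.2

end LiveGameGraph

/-! ### Plays -/

theorem infinite_setOf_iff_forall_exists_ge {p : ℕ → Prop} :
    {i | p i}.Infinite ↔ ∀ N, ∃ i ≥ N, p i :=
  Nat.frequently_atTop_iff_infinite.symm.trans Filter.frequently_atTop

section Plays

open Set

variable {V : Type*} (π : ℕ → V)

def infVisited : Set V := {v | {i | π i = v}.Infinite}

variable {π}

theorem exists_ge_of_mem_infVisited {v : V} (hv : v ∈ infVisited π) (N : ℕ) :
    ∃ i ≥ N, π i = v :=
  infinite_setOf_iff_forall_exists_ge.1 hv N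

theorem infVisited_subset_of_forall_mem {S : Set V} (h : ∀ i, π i ∈ S) : infVisited π ⊆ S :=
  fun _ hv => by
    obtain ⟨i, -, rfl⟩ := exists_ge_of_mem_infVisited hv 0
    exact h i

theorem mem_infVisited_of_infinite_step {v w : V}
    (h : {i | π i = v ∧ π (i + 1) = w}.Infinite) : w ∈ infVisited π := by
  refine infinite_setOf_iff_forall_exists_ge.2 fun N => ?_
  obtain ⟨i, hi, -, hw⟩ := infinite_setOf_iff_forall_exists_ge.1 h N
  exact ⟨i + 1, by omega, hw⟩

theorem infVisited_subset_of_closed {C : Set V} {N : ℕ}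
    (hclosed : ∀ i ≥ N, π i ∈ C → π (i + 1) ∈ C) (hmeets : ∃ i ≥ N, π i ∈ C) :
    infVisited π ⊆ C := by
  obtain ⟨i₀, hi₀, hC⟩ := hmeets
  have hall : ∀ i ≥ i₀, π i ∈ C := fun i hi => by
    induction i, hi using Nat.le_induction with
    | base => exact hC
    | succ m hm ih => exact hclosed m (by omega) ih
  intro v hv
  obtain ⟨i, hi, rfl⟩ := exists_ge_of_mem_infVisited hv i₀
  exact hall i hi

variable [Finite V]

theorem finite_setOf_notMem_infVisited : {i | π i ∉ infVisited π}.Finite := by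
  have : {i | π i ∉ infVisited π} = ⋃ v ∈ (infVisited π)ᶜ, {i | π i = v} := by
    ext i; simp
  rw [this]
  exact (toFinite _).biUnion fun v hv => not_infinite.1 hv

theorem exists_forall_ge_mem_infVisited : ∃ N, ∀ i ≥ N, π i ∈ infVisited π := by
  obtain ⟨N, hN⟩ := (finite_setOf_notMem_infVisited (π := π)).bddAbove
  exact ⟨N + 1, fun i hi => by_contra fun h => by have := hN h; omega⟩

theorem infVisited_nonempty : (infVisited π).Nonempty := by
  obtain ⟨N, hN⟩ := exists_forall_ge_mem_infVisited (π := π)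
  exact ⟨π N, hN N le_rfl⟩

theorem exists_infinite_step_of_mem_infVisited {v : V} (hv : v ∈ infVisited π) :
    ∃ w ∈ infVisited π, {i | π i = v ∧ π (i + 1) = w}.Infinite := by
  have hcover : {i | π i = v} = ⋃ w, {i | π i = v ∧ π (i + 1) = w} := by
    ext i; simp
  obtain ⟨w, hw⟩ : ∃ w, {i | π i = v ∧ π (i + 1) = w}.Infinite := by
    by_contra! h
    exact hv (hcover ▸ finite_iUnion h)
  exact ⟨w, mem_infVisited_of_infinite_step hw, hw⟩

theorem isMinOn_infVisited_of_step_le (c : V → ℕ)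
    (hstep : ∀ i, π i ∈ infVisited π → IsMinOn c (infVisited π) (π i) →
      c (π (i + 1)) ≤ c (π i)) :
    ∀ v ∈ infVisited π, IsMinOn c (infVisited π) v := by
  obtain ⟨N, hN⟩ := exists_forall_ge_mem_infVisited (π := π)
  obtain ⟨u, hu, humin⟩ := (infVisited π).exists_min_image c (Set.toFinite _) infVisited_nonempty
  have hsub : infVisited π ⊆ {v | v ∈ infVisited π ∧ IsMinOn c (infVisited π) v} := by
    refine infVisited_subset_of_closed (N := N) (fun i hi ⟨hiI, himin⟩ => ?_) ?_
    · exact ⟨hN (i + 1) (by omega), isMinOn_iff.2 fun w hw =>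
        (hstep i hiI himin).trans (isMinOn_iff.1 himin w hw)⟩
    · obtain ⟨i, hi, rfl⟩ := exists_ge_of_mem_infVisited hu N
      exact ⟨i, hi, hu, isMinOn_iff.2 humin⟩
  exact fun v hv => (hsub hv).2

end Plays

namespace LiveGameGraph

open Classical

variable {V : Type*} (Gm : LiveGameGraph V) (ρ0 ρ1 : List V → V → V) (v0 : V)

/-- The history and the current vertex after `i` steps of the play of `ρ0` against `ρ1`. -/
noncomputable def playState : ℕ → List V × V
  | 0 => ([], v0)
  | i + 1 =>
    ((playState i).1 ++ [(playState i).2],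
      if (playState i).2 ∈ Gm.V0 then ρ0 (playState i).1 (playState i).2
      else ρ1 (playState i).1 (playState i).2)

noncomputable def play (i : ℕ) : V := (Gm.playState ρ0 ρ1 v0 i).2

theorem playState_fst (i : ℕ) :
    (Gm.playState ρ0 ρ1 v0 i).1 = List.ofFn fun j : Fin i => Gm.play ρ0 ρ1 v0 j := by
  induction i with
  | zero => rfl
  | succ i ih => simp only [List.ofFn_succ_last, Fin.val_castSucc, Fin.val_last, ← ih]; rfl

theorem compliant_play : Gm.Compliant ρ0 ρ1 v0 (Gm.play ρ0 ρ1 v0) := by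
  refine ⟨rfl, fun i => ⟨fun h0 => ?_, fun h1 => ?_⟩⟩
  · change ite _ _ _ = _
    rw [playState_fst]
    exact if_pos h0
  · change ite _ _ _ = _
    rw [playState_fst]
    exact if_neg (Gm.mem_V1_iff.1 h1)

end LiveGameGraph

section VisitCount

open Classical

variable {V : Type*} (π : ℕ → V) (v : V)

/-- The number of visits of `π` to `v` strictly before time `i`. -/
noncomputable def visitCount (i : ℕ) : ℕ := (List.ofFn fun j : Fin i => π j).count v

theorem visitCount_succ (i : ℕ) :
    visitCount π v (i + 1) = visitCount π v i + if π i = v then 1 else 0 := by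
  rw [visitCount, visitCount, List.ofFn_succ_last, List.count_append, List.count_singleton]
  simp

theorem visitCount_le (i : ℕ) : visitCount π v i ≤ i :=
  (List.count_le_length).trans_eq (List.length_ofFn)

theorem visitCount_mono : Monotone (visitCount π v) :=
  monotone_nat_of_le_succ fun i => by rw [visitCount_succ]; omega

variable {π v}

theorem exists_visitCount_eq (hv : v ∈ infVisited π) (c : ℕ) :
    ∃ i, π i = v ∧ visitCount π v i = c := by
  have hunbounded : ∀ c, ∃ i, c < visitCount π v (i + 1) := by
    intro c
    induction c with
    | zero =>
      obtain ⟨i, -, hi⟩ := exists_ge_of_mem_infVisited hv 0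
      exact ⟨i, by rw [visitCount_succ, if_pos hi]; omega⟩
    | succ c ih =>
      obtain ⟨i, hi⟩ := ih
      obtain ⟨j, hj, hjv⟩ := exists_ge_of_mem_infVisited hv (i + 1)
      have := visitCount_mono π v hj
      exact ⟨j, by rw [visitCount_succ, if_pos hjv]; omega⟩
  -- the first time the count exceeds `c` is a visit at which the count is exactly `c`
  have hfirst := Nat.find_spec (hunbounded c)
  have hbefore : visitCount π v (Nat.find (hunbounded c)) ≤ c := by
    rcases hi : Nat.find (hunbounded c) with _ | i
    · simp [visitCount]
    · exact not_lt.1 (Nat.find_min (hunbounded c) (show i < Nat.find (hunbounded c) by omega))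
  rw [visitCount_succ] at hfirst
  split_ifs at hfirst with hvisit
  · exact ⟨_, hvisit, by omega⟩
  · omega

theorem exists_visit_with_visitCount_mem (hv : v ∈ infVisited π) {C : Set ℕ}
    (hC : ∀ N, ∃ c ≥ N, c ∈ C) (N : ℕ) : ∃ i ≥ N, π i = v ∧ visitCount π v i ∈ C := by
  obtain ⟨c, hcN, hcC⟩ := hC N
  obtain ⟨i, hiv, hic⟩ := exists_visitCount_eq hv c
  exact ⟨i, hcN.trans (hic ▸ visitCount_le π v i), hiv, hic ▸ hcC⟩

end VisitCount

section RoundRobin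

variable {V : Type*} [Fintype V]

/-- Enumerates `V` periodically; the argument `v` only witnesses that `V` is nonempty. -/
noncomputable def roundRobin (v : V) (m : ℕ) : V :=
  (Fintype.equivFin V).symm ⟨m % Fintype.card V, Nat.mod_lt _ (Fintype.card_pos_iff.2 ⟨v⟩)⟩

theorem exists_ge_roundRobin_eq (v w : V) (N : ℕ) : ∃ m ≥ N, roundRobin v m = w := by
  have hpos : 0 < Fintype.card V := Fintype.card_pos_iff.2 ⟨v⟩
  have hidx := (Fintype.equivFin V w).isLt
  refine ⟨Fintype.equivFin V w + Fintype.card V * N, by nlinarith, ?_⟩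
  rw [roundRobin, Equiv.symm_apply_eq]
  ext
  simp [Nat.add_mul_mod_self_left, Nat.mod_eq_of_lt hidx]

end RoundRobin

/-! ### The chain fixpoint -/

/-- A live game graph with Rabin pairs `(G m, R m)`, of which the pairs `1, …, K` enter the
chain fixpoint. -/
structure RabinGame (V : Type*) extends LiveGameGraph V where
  G : ℕ → Set V
  R : ℕ → Set V
  K : ℕ

namespace RabinGame

open Set LiveGameGraph

variable {V : Type*} (P : RabinGame V)

/-- The term `C̃_m` of the chain fixpoint, with `Y_m := Y` and `X_m := X`. -/
def cTerm (Y X : Set V) (m : ℕ) : Set V := (P.R m)ᶜ ∩ ((P.G m ∩ P.cpre Y) ∪ P.apre Y X)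

/-- `νY_j. μX_j. ⋯ νY_1. μX_1. acc ∪ C̃_j ∪ ⋯ ∪ C̃_1`. -/
def nest (j : ℕ) (acc : Set V) : Set V := P.chainAux P.G P.R j acc

def win : Set V := P.nest P.K ∅

def rabin (π : ℕ → V) : Prop :=
  ∃ j ∈ Finset.Ico 1 P.K, (∃ N, ∀ i ≥ N, π i ∉ P.R j) ∧ ∀ N, ∃ i ≥ N, π i ∈ P.G j

variable {P}

theorem mem_cTerm {Y X : Set V} {m : ℕ} {v : V} :
    v ∈ P.cTerm Y X m ↔ v ∉ P.R m ∧
      (v ∈ P.G m ∩ P.cpre Y ∨ v ∈ P.cpre X ∨ v ∈ P.lpre X ∩ P.pre1 Y) := by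
  simp only [cTerm, apre, mem_inter_iff, mem_compl_iff, mem_union]

theorem cTerm_mono {Y Y' X X' : Set V} (m : ℕ) (hY : Y ⊆ Y') (hX : X ⊆ X') :
    P.cTerm Y X m ⊆ P.cTerm Y' X' m :=
  inter_subset_inter_right _
    (union_subset_union (inter_subset_inter_right _ (cpre_mono_s13 hY)) (apre_mono_s13 hY hX))

theorem nest_mono (j : ℕ) : Monotone (P.nest j) := by
  induction j with
  | zero => exact fun _ _ h => h
  | succ j ih =>
    exact fun _ _ h => gfpSet_mono_s13 fun _ => lfpSet_mono_s13 fun _ =>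
      ih (union_subset_union_left _ h)

theorem monotone_nest_cTerm_right (j m : ℕ) (acc Y : Set V) :
    Monotone fun X => P.nest j (acc ∪ P.cTerm Y X m) :=
  fun _ _ h => nest_mono j (union_subset_union_right _ (cTerm_mono m subset_rfl h))

theorem monotone_lfpSet_nest_cTerm (j m : ℕ) (acc : Set V) :
    Monotone fun Y => lfpSet fun X => P.nest j (acc ∪ P.cTerm Y X m) :=
  fun _ _ h => lfpSet_mono_s13 fun _ =>
    nest_mono j (union_subset_union_right _ (cTerm_mono m h subset_rfl))

variable (P)

theorem nest_succ_eq_lfpSet (j : ℕ) (acc : Set V) :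
    P.nest (j + 1) acc =
      lfpSet fun X => P.nest j (acc ∪ P.cTerm (P.nest (j + 1) acc) X (j + 1)) :=
  (map_gfpSet (monotone_lfpSet_nest_cTerm j (j + 1) acc)).symm

/-- The stages of the least fixpoint in `X_{j+1}`, the variable `Y_{j+1}` being at its
greatest fixpoint. -/
def muStage (j : ℕ) (acc : Set V) (n : ℕ) : Set V :=
  (fun X => P.nest j (acc ∪ P.cTerm (P.nest (j + 1) acc) X (j + 1)))^[n] ∅

/-- The stages of the greatest fixpoint in `Y_{j+1}`. -/
def nuStage (j : ℕ) (acc : Set V) (n : ℕ) : Set V :=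
  (fun Y => lfpSet fun X => P.nest j (acc ∪ P.cTerm Y X (j + 1)))^[n] univ

theorem muStage_succ (j : ℕ) (acc : Set V) (n : ℕ) :
    P.muStage j acc (n + 1) =
      P.nest j (acc ∪ P.cTerm (P.nest (j + 1) acc) (P.muStage j acc n) (j + 1)) :=
  Function.iterate_succ_apply' ..

theorem nuStage_succ (j : ℕ) (acc : Set V) (n : ℕ) :
    P.nuStage j acc (n + 1) =
      lfpSet fun X => P.nest j (acc ∪ P.cTerm (P.nuStage j acc n) X (j + 1)) :=
  Function.iterate_succ_apply' ..

theorem muStage_subset_nest (j : ℕ) (acc : Set V) (n : ℕ) :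
    P.muStage j acc n ⊆ P.nest (j + 1) acc := by
  rw [nest_succ_eq_lfpSet]
  exact iterate_subset_lfpSet (monotone_nest_cTerm_right ..) n

theorem nest_subset_nuStage (j : ℕ) (acc : Set V) (n : ℕ) :
    P.nest (j + 1) acc ⊆ P.nuStage j acc n :=
  gfpSet_subset_iterate (monotone_lfpSet_nest_cTerm ..) n

theorem nest_eq_muStage_card [Fintype V] (j : ℕ) (acc : Set V) :
    P.nest (j + 1) acc = P.muStage j acc (Fintype.card V) := by
  rw [nest_succ_eq_lfpSet]
  exact lfpSet_eq_iterate_card (monotone_nest_cTerm_right ..)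

theorem nest_eq_nuStage_card [Fintype V] (j : ℕ) (acc : Set V) :
    P.nest (j + 1) acc = P.nuStage j acc (Fintype.card V) :=
  gfpSet_eq_iterate_card (monotone_lfpSet_nest_cTerm ..)

end RabinGame

/-! ### Player 0 wins from the chain fixpoint -/

namespace RabinGame

open Set LiveGameGraph

variable {V : Type*} (P : RabinGame V)

/-- The terms `C̃_K ∪ … ∪ C̃_{ℓ+1}` accumulated along the derivation of `v ∈ P.win`: at each
level `Y` is at its greatest fixpoint and `X` at the last stage before the one that `v` enters. -/
noncomputable def acc (ℓ : ℕ) (v : V) : Set V :=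
  if P.K ≤ ℓ then ∅
  else
    acc (ℓ + 1) v ∪
      P.cTerm (P.nest (ℓ + 1) (acc (ℓ + 1) v))
        (P.muStage ℓ (acc (ℓ + 1) v) (sInf {n | v ∈ P.muStage ℓ (acc (ℓ + 1) v) n} - 1)) (ℓ + 1)
termination_by P.K - ℓ

/-- The stage at which `v` enters the least fixpoint in `X_{ℓ+1}`. -/
noncomputable def rank (ℓ : ℕ) (v : V) : ℕ := sInf {n | v ∈ P.muStage ℓ (P.acc (ℓ + 1) v) n}

variable {P} {ℓ : ℕ} {v w : V}

theorem acc_of_le (h : P.K ≤ ℓ) : P.acc ℓ v = ∅ := by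
  rw [acc, if_pos h]

theorem acc_of_lt (h : ℓ < P.K) :
    P.acc ℓ v = P.acc (ℓ + 1) v ∪ P.cTerm (P.nest (ℓ + 1) (P.acc (ℓ + 1) v))
      (P.muStage ℓ (P.acc (ℓ + 1) v) (P.rank ℓ v - 1)) (ℓ + 1) := by
  rw [acc, if_neg (by omega)]; rfl

theorem nest_acc_eq_muStage (h : ℓ < P.K) :
    P.nest ℓ (P.acc ℓ v) = P.muStage ℓ (P.acc (ℓ + 1) v) (P.rank ℓ v - 1 + 1) := by
  rw [acc_of_lt h, muStage_succ]

theorem rank_le_card [Fintype V] : P.rank ℓ v ≤ Fintype.card V := by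
  by_cases hv : v ∈ P.nest (ℓ + 1) (P.acc (ℓ + 1) v)
  · exact Nat.sInf_le (show v ∈ _ from nest_eq_muStage_card P ℓ _ ▸ hv)
  · have : {n | v ∈ P.muStage ℓ (P.acc (ℓ + 1) v) n} = ∅ :=
      eq_empty_of_forall_notMem fun n hn => hv (P.muStage_subset_nest ℓ _ n hn)
    rw [rank, this, Nat.sInf_empty]
    exact Nat.zero_le _

theorem mem_muStage_rank [Fintype V] (hv : v ∈ P.nest (ℓ + 1) (P.acc (ℓ + 1) v)) :
    v ∈ P.muStage ℓ (P.acc (ℓ + 1) v) (P.rank ℓ v) :=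
  Nat.sInf_mem (s := {n | v ∈ P.muStage ℓ (P.acc (ℓ + 1) v) n})
    ⟨_, nest_eq_muStage_card P ℓ _ ▸ hv⟩

theorem rank_pos [Fintype V] (hv : v ∈ P.nest (ℓ + 1) (P.acc (ℓ + 1) v)) : 1 ≤ P.rank ℓ v := by
  by_contra! h0
  have := mem_muStage_rank hv
  rw [Nat.lt_one_iff.1 h0] at this
  exact this

theorem nest_acc_eq_muStage_rank [Fintype V] (h : ℓ < P.K)
    (hv : v ∈ P.nest (ℓ + 1) (P.acc (ℓ + 1) v)) :
    P.nest ℓ (P.acc ℓ v) = P.muStage ℓ (P.acc (ℓ + 1) v) (P.rank ℓ v) := by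
  rw [nest_acc_eq_muStage h, Nat.sub_add_cancel (rank_pos hv)]

theorem nest_acc_subset_succ (h : ℓ < P.K) :
    P.nest ℓ (P.acc ℓ v) ⊆ P.nest (ℓ + 1) (P.acc (ℓ + 1) v) :=
  nest_acc_eq_muStage h ▸ P.muStage_subset_nest ℓ _ _

theorem nest_acc_subset {ℓ' : ℕ} (hℓ : ℓ ≤ ℓ') (hℓ' : ℓ' ≤ P.K) :
    P.nest ℓ (P.acc ℓ v) ⊆ P.nest ℓ' (P.acc ℓ' v) := by
  induction ℓ', hℓ using Nat.le_induction with
  | base => exact subset_rfl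
  | succ m _ ih => exact (ih (by omega)).trans (nest_acc_subset_succ (by omega))

theorem nest_acc_subset_win (hℓ : ℓ ≤ P.K) : P.nest ℓ (P.acc ℓ v) ⊆ P.win := by
  have := nest_acc_subset (v := v) hℓ le_rfl
  rwa [acc_of_le le_rfl] at this

theorem mem_nest_acc [Fintype V] (hv : v ∈ P.win) (hℓ : ℓ ≤ P.K) :
    v ∈ P.nest ℓ (P.acc ℓ v) := by
  induction hℓ using Nat.decreasingInduction with
  | self => rwa [acc_of_le le_rfl]
  | of_succ ℓ h ih => exact nest_acc_eq_muStage_rank h ih ▸ mem_muStage_rank ih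

end RabinGame

namespace RabinGame

open Set LiveGameGraph

variable {V : Type*} [Fintype V] {P : RabinGame V} {ℓ : ℕ} {v w : V}

variable (P) in
noncomputable def code (ℓ : ℕ) (v : V) : ℕ :=
  lexCode P.K (Fintype.card V) (fun m => P.rank m v) ℓ

theorem code_of_lt (h : ℓ < P.K) :
    P.code ℓ v = P.code (ℓ + 1) v * (Fintype.card V + 1) + P.rank ℓ v :=
  lexCode_of_lt h

theorem code_le_of_mem_muStage (h : ℓ < P.K)
    (hsucc : ∀ w ∈ P.nest (ℓ + 1) (P.acc (ℓ + 1) v), P.code (ℓ + 1) w ≤ P.code (ℓ + 1) v ∧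
      (P.code (ℓ + 1) w = P.code (ℓ + 1) v → P.acc (ℓ + 1) w = P.acc (ℓ + 1) v))
    {t : ℕ} (hw : w ∈ P.muStage ℓ (P.acc (ℓ + 1) v) t) :
    P.code ℓ w ≤ P.code (ℓ + 1) v * (Fintype.card V + 1) + t ∧
      (P.code ℓ w = P.code (ℓ + 1) v * (Fintype.card V + 1) + t →
        P.acc (ℓ + 1) w = P.acc (ℓ + 1) v ∧ P.rank ℓ w = t) := by
  obtain ⟨hle, heq⟩ := hsucc w (P.muStage_subset_nest ℓ _ t hw)
  rcases hle.lt_or_eq with hlt | hcode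
  · have : P.code ℓ w < P.code (ℓ + 1) v * (Fintype.card V + 1) :=
      lexCode_lt_mul_of_succ_lt h (rank_le_card (P := P) (v := w)) hlt
    exact ⟨by omega, fun he => by omega⟩
  · have hacc := heq hcode
    have hrank : P.rank ℓ w ≤ t :=
      Nat.sInf_le (show w ∈ P.muStage ℓ (P.acc (ℓ + 1) w) t from hacc ▸ hw)
    rw [code_of_lt h, hcode]
    exact ⟨by omega, fun he => ⟨hacc, by omega⟩⟩

theorem code_le_and_acc_eq_of_mem_nest_acc (hv : v ∈ P.win) (hℓ : ℓ ≤ P.K) :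
    ∀ w ∈ P.nest ℓ (P.acc ℓ v),
      P.code ℓ w ≤ P.code ℓ v ∧ (P.code ℓ w = P.code ℓ v → P.acc ℓ w = P.acc ℓ v) := by
  induction hℓ using Nat.decreasingInduction with
  | self => intro w _; simp [code, lexCode_of_le, acc_of_le]
  | of_succ ℓ h ih =>
    intro w hw
    rw [nest_acc_eq_muStage_rank h (mem_nest_acc hv h)] at hw
    obtain ⟨hle, heq⟩ := code_le_of_mem_muStage h ih hw
    rw [code_of_lt h (v := v)]
    refine ⟨hle, fun he => ?_⟩
    obtain ⟨hacc, hrank⟩ := heq he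
    rw [acc_of_lt h, acc_of_lt h, hacc, hrank]

theorem code_le_of_mem_nest_acc (hv : v ∈ P.win) (hℓ : ℓ ≤ P.K)
    (hw : w ∈ P.nest ℓ (P.acc ℓ v)) : P.code ℓ w ≤ P.code ℓ v :=
  (code_le_and_acc_eq_of_mem_nest_acc hv hℓ w hw).1

theorem code_lt_of_mem_muStage_rank_pred (hv : v ∈ P.win) (h : ℓ < P.K)
    (hw : w ∈ P.muStage ℓ (P.acc (ℓ + 1) v) (P.rank ℓ v - 1)) : P.code ℓ w < P.code ℓ v := by
  have hle := (code_le_of_mem_muStage h (code_le_and_acc_eq_of_mem_nest_acc hv h) hw).1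
  have := rank_pos (mem_nest_acc hv h)
  rw [code_of_lt h (v := v)]
  omega

end RabinGame

namespace RabinGame

open Set LiveGameGraph Classical

variable {V : Type*} [Fintype V] {P : RabinGame V} {v w : V}

theorem exists_mem_cTerm_acc (hv : v ∈ P.win) :
    ∃ m < P.K, v ∈ P.cTerm (P.nest (m + 1) (P.acc (m + 1) v))
      (P.muStage m (P.acc (m + 1) v) (P.rank m v - 1)) (m + 1) := by
  by_contra! hnot
  have hnotMem : ∀ ℓ ≤ P.K, v ∉ P.acc ℓ v := by
    intro ℓ hℓ
    induction hℓ using Nat.decreasingInduction with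
    | self => rw [acc_of_le le_rfl]; exact notMem_empty v
    | of_succ ℓ h ih => rw [acc_of_lt h]; exact fun hmem => hmem.elim ih (hnot ℓ h)
  exact hnotMem 0 (Nat.zero_le _) (mem_nest_acc hv (Nat.zero_le _))

variable (P)

/-- The index `m` of the term `C̃_{m+1}` through which `v ∈ P.win` is derived. -/
noncomputable def activeLevel (v : V) : ℕ :=
  if hv : v ∈ P.win then (exists_mem_cTerm_acc hv).choose else 0

noncomputable def yTarget (v : V) : Set V :=
  P.nest (P.activeLevel v + 1) (P.acc (P.activeLevel v + 1) v)

noncomputable def xTarget (v : V) : Set V :=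
  P.muStage (P.activeLevel v) (P.acc (P.activeLevel v + 1) v) (P.rank (P.activeLevel v) v - 1)

/-- Where the winning strategy moves from `v`: towards `X` when it can, otherwise towards `Y`. -/
noncomputable def target (v : V) : Set V :=
  if v ∈ P.cpre (P.xTarget v) then P.xTarget v else P.yTarget v

variable {P}

theorem activeLevel_lt (hv : v ∈ P.win) : P.activeLevel v < P.K := by
  rw [activeLevel, dif_pos hv]
  exact (exists_mem_cTerm_acc hv).choose_spec.1

theorem mem_cTerm_activeLevel (hv : v ∈ P.win) :
    v ∈ P.cTerm (P.yTarget v) (P.xTarget v) (P.activeLevel v + 1) := by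
  rw [yTarget, xTarget, activeLevel, dif_pos hv]
  exact (exists_mem_cTerm_acc hv).choose_spec.2

theorem target_subset_yTarget : P.target v ⊆ P.yTarget v := by
  unfold target
  split_ifs
  · exact P.muStage_subset_nest _ _ _
  · exact subset_rfl

theorem target_subset_win (hv : v ∈ P.win) : P.target v ⊆ P.win :=
  target_subset_yTarget.trans (nest_acc_subset_win (activeLevel_lt hv))

theorem code_le_of_mem_target (hv : v ∈ P.win) {j : ℕ} (hj : P.activeLevel v < j)
    (hjK : j ≤ P.K) (hw : w ∈ P.target v) : P.code j w ≤ P.code j v :=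
  code_le_of_mem_nest_acc hv hjK (nest_acc_subset hj hjK (target_subset_yTarget hw))

theorem code_lt_of_mem_xTarget (hv : v ∈ P.win) (hw : w ∈ P.xTarget v) :
    P.code (P.activeLevel v) w < P.code (P.activeLevel v) v :=
  code_lt_of_mem_muStage_rank_pred hv (activeLevel_lt hv) hw

theorem notMem_R_activeLevel (hv : v ∈ P.win) : v ∉ P.R (P.activeLevel v + 1) :=
  (mem_cTerm.1 (mem_cTerm_activeLevel hv)).1

theorem mem_G_or_mem_lpre_of_notMem_cpre (hv : v ∈ P.win) (hX : v ∉ P.cpre (P.xTarget v)) :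
    v ∈ P.G (P.activeLevel v + 1) ∨ v ∈ P.lpre (P.xTarget v) := by
  rcases (mem_cTerm.1 (mem_cTerm_activeLevel hv)).2 with hG | hcpre | hlive
  · exact Or.inl hG.1
  · exact absurd hcpre hX
  · exact Or.inr hlive.1

theorem exists_edge_mem_target (hv : v ∈ P.win) (h0 : v ∈ P.V0) :
    ∃ w, P.E v w ∧ w ∈ P.target v := by
  unfold target
  split_ifs with hX
  · exact exists_edge_of_mem_cpre h0 hX
  · rcases (mem_cTerm.1 (mem_cTerm_activeLevel hv)).2 with hG | hcpre | hlive
    · exact exists_edge_of_mem_cpre h0 hG.2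
    · exact absurd hcpre hX
    · exact absurd hlive.1 (P.notMem_lpre_of_mem_V0 h0 _)

theorem mem_target_of_edge (hv : v ∈ P.win) (h1 : v ∈ P.V1) (he : P.E v w) :
    w ∈ P.target v := by
  unfold target
  split_ifs with hX
  · exact mem_of_mem_cpre h1 hX he
  · rcases (mem_cTerm.1 (mem_cTerm_activeLevel hv)).2 with hG | hcpre | hlive
    · exact mem_of_mem_cpre h1 hG.2 he
    · exact absurd hcpre hX
    · exact hlive.2.2 w he

variable (P)

noncomputable def strategy (v : V) : V :=
  if h : v ∈ P.win ∧ v ∈ P.V0 then (exists_edge_mem_target h.1 h.2).choose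
  else (P.succ_nonempty v).choose

variable {P}

theorem strategy_edge (v : V) : P.E v (P.strategy v) := by
  unfold strategy
  split_ifs with h
  · exact (exists_edge_mem_target h.1 h.2).choose_spec.1
  · exact (P.succ_nonempty v).choose_spec

theorem strategy_mem_target (hv : v ∈ P.win) (h0 : v ∈ P.V0) : P.strategy v ∈ P.target v := by
  rw [strategy, dif_pos ⟨hv, h0⟩]
  exact (exists_edge_mem_target hv h0).choose_spec.2

end RabinGame

namespace RabinGame

open Set LiveGameGraph

variable {V : Type*} [Fintype V] {P : RabinGame V} {π : ℕ → V}

theorem mem_win_and_mem_target_of_compliant {ρ1 : List V → V → V} {v0 : V}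
    (hρ1 : P.Strategy1 ρ1) (hv0 : v0 ∈ P.win)
    (hπ : P.Compliant (fun _ v => P.strategy v) ρ1 v0 π) (i : ℕ) :
    π i ∈ P.win ∧ π (i + 1) ∈ P.target (π i) := by
  have hstep : ∀ i, π i ∈ P.win → π (i + 1) ∈ P.target (π i) := by
    intro i hi
    by_cases h0 : π i ∈ P.V0
    · rw [(hπ.2 i).1 h0]
      exact strategy_mem_target hi h0
    · have h1 := P.mem_V1_iff.2 h0
      exact mem_target_of_edge hi h1 ((hπ.2 i).2 h1 ▸ hρ1 _ _ h1)
  have hwin : ∀ i, π i ∈ P.win := by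
    intro i
    induction i with
    | zero => exact hπ.1 ▸ hv0
    | succ i ih => exact target_subset_win ih (hstep i ih)
  exact ⟨hwin i, hstep i (hwin i)⟩

theorem exists_infVisited_mem_xTarget (hπ : ∀ i, π i ∈ P.win ∧ π (i + 1) ∈ P.target (π i))
    (hfair : P.StronglyFair π) {w : V} (hw : w ∈ infVisited π)
    (hG : w ∉ P.G (P.activeLevel w + 1)) : ∃ w' ∈ infVisited π, w' ∈ P.xTarget w := by
  obtain ⟨i₀, -, rfl⟩ := exists_ge_of_mem_infVisited hw 0
  by_cases hX : π i₀ ∈ P.cpre (P.xTarget (π i₀))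
  · obtain ⟨w', hw', hinf⟩ := exists_infinite_step_of_mem_infVisited hw
    obtain ⟨i, hi, rfl⟩ := hinf.nonempty
    have := (hπ i).2
    rw [target, hi, if_pos hX] at this
    exact ⟨_, hw', this⟩
  · rcases mem_G_or_mem_lpre_of_notMem_cpre (hπ i₀).1 hX with hg | ⟨w', hl, hw'⟩
    · exact absurd hg hG
    · exact ⟨w', mem_infVisited_of_infinite_step (hfair _ w' hl hw), hw'⟩

/-- The code at level `j` is constant on the infinitely visited vertices, while a vertex derived
at level `j + 1` outside `G (j + 1)` has an infinitely visited successor of smaller code. -/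
theorem activeLevel_lt_of_notMem_G (hπ : ∀ i, π i ∈ P.win ∧ π (i + 1) ∈ P.target (π i))
    (hfair : P.StronglyFair π) {j : ℕ} (hj : j < P.K)
    (hlt : ∀ w ∈ infVisited π, P.activeLevel w < j + 1)
    (hG : ∀ w ∈ infVisited π, P.activeLevel w = j → w ∉ P.G (j + 1)) :
    ∀ w ∈ infVisited π, P.activeLevel w < j := by
  have hwin := infVisited_subset_of_forall_mem fun i => (hπ i).1
  have hmin : ∀ w ∈ infVisited π, IsMinOn (P.code j) (infVisited π) w →
      P.activeLevel w < j := by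
    intro w hw hwmin
    by_contra hge
    have hwj : P.activeLevel w = j := by have := hlt w hw; omega
    obtain ⟨w', hw', hx⟩ := exists_infVisited_mem_xTarget hπ hfair hw (hwj ▸ hG w hw hwj)
    have := code_lt_of_mem_xTarget (hwin hw) hx
    rw [hwj] at this
    exact (isMinOn_iff.1 hwmin w' hw').not_gt this
  have hall := isMinOn_infVisited_of_step_le (P.code j) fun i hi himin =>
    code_le_of_mem_target (hπ i).1 (hmin _ hi himin) hj.le (hπ i).2
  exact fun w hw => hmin w hw (hall w hw)

theorem exists_level_G_infVisited (hπ : ∀ i, π i ∈ P.win ∧ π (i + 1) ∈ P.target (π i))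
    (hfair : P.StronglyFair π) :
    ∃ j, 1 ≤ j ∧ j ≤ P.K ∧ (∃ u ∈ infVisited π, u ∈ P.G j) ∧
      ∀ w ∈ infVisited π, P.activeLevel w < j := by
  suffices h : ∀ j ≤ P.K, (∀ w ∈ infVisited π, P.activeLevel w < j) →
      ∃ j' ≤ j, 1 ≤ j' ∧ (∃ u ∈ infVisited π, u ∈ P.G j') ∧
        ∀ w ∈ infVisited π, P.activeLevel w < j' by
    obtain ⟨j, hjK, hj⟩ := h P.K le_rfl fun w hw =>
      activeLevel_lt (infVisited_subset_of_forall_mem (fun i => (hπ i).1) hw)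
    exact ⟨j, hj.1, hjK, hj.2⟩
  intro j hjK hlt
  induction j with
  | zero =>
    obtain ⟨u, hu⟩ := infVisited_nonempty (π := π)
    exact absurd (hlt u hu) (Nat.not_lt_zero _)
  | succ j ih =>
    by_cases hG : ∃ u ∈ infVisited π, P.activeLevel u = j ∧ u ∈ P.G (j + 1)
    · obtain ⟨u, hu, -, hug⟩ := hG
      exact ⟨j + 1, le_rfl, by omega, ⟨u, hu, hug⟩, hlt⟩
    · push Not at hG
      obtain ⟨j', hj', hrest⟩ :=
        ih (by omega) (activeLevel_lt_of_notMem_G hπ hfair (by omega) hlt hG)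
      exact ⟨j', by omega, hrest⟩

theorem rabin_of_compliant_strategy (hGK : P.G P.K = ∅) (hR : AntitoneOn P.R (Ico 1 P.K))
    {ρ1 : List V → V → V} {v0 : V} (hρ1 : P.Strategy1 ρ1) (hv0 : v0 ∈ P.win)
    (hcompl : P.Compliant (fun _ v => P.strategy v) ρ1 v0 π) (hfair : P.StronglyFair π) :
    P.rabin π := by
  have hπ := mem_win_and_mem_target_of_compliant hρ1 hv0 hcompl
  obtain ⟨j, hj1, hjK, ⟨u, hu, hug⟩, hlt⟩ := exists_level_G_infVisited hπ hfair
  have hjK' : j < P.K := hjK.lt_of_ne fun h => by rw [h, hGK] at hug; exact hug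
  obtain ⟨N, hN⟩ := exists_forall_ge_mem_infVisited (π := π)
  refine ⟨j, Finset.mem_Ico.2 ⟨hj1, hjK'⟩, ⟨N, fun i hi hR' => ?_⟩, fun M => ?_⟩
  · have hact := hlt _ (hN i hi)
    exact notMem_R_activeLevel (hπ i).1
      (hR ⟨by omega, by omega⟩ ⟨hj1, hjK'⟩ (by omega) hR')
  · obtain ⟨i, hi, rfl⟩ := exists_ge_of_mem_infVisited hu M
    exact ⟨i, hi, hug⟩

end RabinGame

/-! ### Player 1 wins outside the chain fixpoint -/

namespace RabinGame

open Set LiveGameGraph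

variable {V : Type*} (P : RabinGame V)

/-- The terms `C̃_K ∪ … ∪ C̃_{ℓ+1}` accumulated along a refutation of `v ∈ P.win`: at each level
`Y` is at the last stage of its greatest fixpoint that still contains `v`, and `X` at its least
fixpoint. -/
noncomputable def coAcc (ℓ : ℕ) (v : V) : Set V :=
  if P.K ≤ ℓ then ∅
  else
    coAcc (ℓ + 1) v ∪
      P.cTerm (P.nuStage ℓ (coAcc (ℓ + 1) v) (sInf {n | v ∉ P.nuStage ℓ (coAcc (ℓ + 1) v) n} - 1))
        (lfpSet fun X => P.nest ℓ (coAcc (ℓ + 1) v ∪ P.cTerm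
          (P.nuStage ℓ (coAcc (ℓ + 1) v) (sInf {n | v ∉ P.nuStage ℓ (coAcc (ℓ + 1) v) n} - 1))
          X (ℓ + 1))) (ℓ + 1)
termination_by P.K - ℓ

/-- The stage at which `v` leaves the greatest fixpoint in `Y_{ℓ+1}`. -/
noncomputable def coRank (ℓ : ℕ) (v : V) : ℕ := sInf {n | v ∉ P.nuStage ℓ (P.coAcc (ℓ + 1) v) n}

/-- The last stage of the greatest fixpoint in `Y_{ℓ+1}` that contains `v`. -/
noncomputable def escapeSet (ℓ : ℕ) (v : V) : Set V :=
  P.nuStage ℓ (P.coAcc (ℓ + 1) v) (P.coRank ℓ v - 1)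

variable {P} {ℓ : ℕ} {v w : V}

theorem coAcc_of_le (h : P.K ≤ ℓ) : P.coAcc ℓ v = ∅ := by
  rw [coAcc, if_pos h]

theorem coAcc_of_lt (h : ℓ < P.K) :
    P.coAcc ℓ v = P.coAcc (ℓ + 1) v ∪ P.cTerm (P.escapeSet ℓ v)
      (lfpSet fun X => P.nest ℓ (P.coAcc (ℓ + 1) v ∪ P.cTerm (P.escapeSet ℓ v) X (ℓ + 1)))
      (ℓ + 1) := by
  rw [coAcc, if_neg (by omega)]; rfl

theorem nest_coAcc_eq_lfpSet (h : ℓ < P.K) :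
    P.nest ℓ (P.coAcc ℓ v) =
      lfpSet fun X => P.nest ℓ (P.coAcc (ℓ + 1) v ∪ P.cTerm (P.escapeSet ℓ v) X (ℓ + 1)) := by
  conv_lhs => rw [coAcc_of_lt h]
  exact map_lfpSet (monotone_nest_cTerm_right ..)

theorem nest_coAcc_eq_nuStage (h : ℓ < P.K) :
    P.nest ℓ (P.coAcc ℓ v) = P.nuStage ℓ (P.coAcc (ℓ + 1) v) (P.coRank ℓ v - 1 + 1) := by
  rw [nuStage_succ, nest_coAcc_eq_lfpSet h]; rfl

theorem coAcc_subset_coAcc_zero (hℓ : ℓ ≤ P.K) : P.coAcc ℓ v ⊆ P.coAcc 0 v := by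
  induction ℓ with
  | zero => exact subset_rfl
  | succ ℓ ih =>
    refine subset_trans ?_ (ih (by omega))
    rw [coAcc_of_lt (P := P) (v := v) (ℓ := ℓ) (by omega)]
    exact subset_union_left

theorem coRank_le_card [Fintype V] : P.coRank ℓ v ≤ Fintype.card V := by
  by_cases hv : v ∈ P.nest (ℓ + 1) (P.coAcc (ℓ + 1) v)
  · have : {n | v ∉ P.nuStage ℓ (P.coAcc (ℓ + 1) v) n} = ∅ :=
      eq_empty_of_forall_notMem fun n hn => hn (P.nest_subset_nuStage ℓ _ n hv)
    rw [coRank, this, Nat.sInf_empty]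
    exact Nat.zero_le _
  · exact Nat.sInf_le (show v ∉ _ from nest_eq_nuStage_card P ℓ _ ▸ hv)

theorem notMem_nuStage_coRank [Fintype V] (hv : v ∉ P.nest (ℓ + 1) (P.coAcc (ℓ + 1) v)) :
    v ∉ P.nuStage ℓ (P.coAcc (ℓ + 1) v) (P.coRank ℓ v) :=
  Nat.sInf_mem (s := {n | v ∉ P.nuStage ℓ (P.coAcc (ℓ + 1) v) n})
    ⟨_, nest_eq_nuStage_card P ℓ _ ▸ hv⟩

theorem coRank_pos [Fintype V] (hv : v ∉ P.nest (ℓ + 1) (P.coAcc (ℓ + 1) v)) :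
    1 ≤ P.coRank ℓ v := by
  by_contra! h0
  have := notMem_nuStage_coRank hv
  rw [Nat.lt_one_iff.1 h0] at this
  exact this (mem_univ v)

theorem nest_coAcc_eq_nuStage_coRank [Fintype V] (h : ℓ < P.K)
    (hv : v ∉ P.nest (ℓ + 1) (P.coAcc (ℓ + 1) v)) :
    P.nest ℓ (P.coAcc ℓ v) = P.nuStage ℓ (P.coAcc (ℓ + 1) v) (P.coRank ℓ v) := by
  rw [nest_coAcc_eq_nuStage h, Nat.sub_add_cancel (coRank_pos hv)]

theorem notMem_nest_coAcc [Fintype V] (hv : v ∉ P.win) (hℓ : ℓ ≤ P.K) :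
    v ∉ P.nest ℓ (P.coAcc ℓ v) := by
  induction hℓ using Nat.decreasingInduction with
  | self => rwa [coAcc_of_le le_rfl]
  | of_succ ℓ h ih => exact nest_coAcc_eq_nuStage_coRank h ih ▸ notMem_nuStage_coRank ih

theorem win_subset_nest_coAcc (hℓ : ℓ ≤ P.K) : P.win ⊆ P.nest ℓ (P.coAcc ℓ v) := by
  induction hℓ using Nat.decreasingInduction with
  | self => rw [coAcc_of_le le_rfl]; exact subset_rfl
  | of_succ ℓ h ih =>
    refine ih.trans ?_
    rw [nest_coAcc_eq_lfpSet h, nest_succ_eq_lfpSet]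
    exact lfpSet_mono_s13 fun X => nest_mono ℓ (union_subset_union_right _
      (cTerm_mono _ (P.nest_subset_nuStage ℓ _ _) subset_rfl))

theorem win_subset_escapeSet (h : ℓ < P.K) : P.win ⊆ P.escapeSet ℓ v :=
  (win_subset_nest_coAcc h).trans (P.nest_subset_nuStage ℓ _ _)

theorem notMem_cTerm_coAcc [Fintype V] (hv : v ∉ P.win) (h : ℓ < P.K) :
    v ∉ P.cTerm (P.escapeSet ℓ v) (P.nest ℓ (P.coAcc ℓ v)) (ℓ + 1) := by
  intro hmem
  rw [nest_coAcc_eq_lfpSet h] at hmem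
  have hacc : v ∈ P.coAcc ℓ v := by
    rw [coAcc_of_lt h]
    exact Or.inr hmem
  exact notMem_nest_coAcc hv (Nat.zero_le _) (coAcc_subset_coAcc_zero h.le hacc)

end RabinGame

namespace RabinGame

open Set LiveGameGraph

variable {V : Type*} [Fintype V] {P : RabinGame V} {ℓ : ℕ} {v w : V}

variable (P) in
noncomputable def coCode (ℓ : ℕ) (v : V) : ℕ :=
  lexCode P.K (Fintype.card V) (fun m => P.coRank m v) ℓ

theorem coCode_of_lt (h : ℓ < P.K) :
    P.coCode ℓ v = P.coCode (ℓ + 1) v * (Fintype.card V + 1) + P.coRank ℓ v :=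
  lexCode_of_lt h

theorem coCode_le_of_notMem_nuStage (h : ℓ < P.K)
    (hsucc : ∀ w ∉ P.nest (ℓ + 1) (P.coAcc (ℓ + 1) v), P.coCode (ℓ + 1) w ≤ P.coCode (ℓ + 1) v ∧
      (P.coCode (ℓ + 1) w = P.coCode (ℓ + 1) v → P.coAcc (ℓ + 1) w = P.coAcc (ℓ + 1) v))
    {t : ℕ} (hw : w ∉ P.nuStage ℓ (P.coAcc (ℓ + 1) v) t) :
    P.coCode ℓ w ≤ P.coCode (ℓ + 1) v * (Fintype.card V + 1) + t ∧
      (P.coCode ℓ w = P.coCode (ℓ + 1) v * (Fintype.card V + 1) + t →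
        P.coAcc (ℓ + 1) w = P.coAcc (ℓ + 1) v ∧ P.coRank ℓ w = t) := by
  obtain ⟨hle, heq⟩ := hsucc w fun h' => hw (P.nest_subset_nuStage ℓ _ t h')
  rcases hle.lt_or_eq with hlt | hcode
  · have : P.coCode ℓ w < P.coCode (ℓ + 1) v * (Fintype.card V + 1) :=
      lexCode_lt_mul_of_succ_lt h (coRank_le_card (P := P) (v := w)) hlt
    exact ⟨by omega, fun he => by omega⟩
  · have hacc := heq hcode
    have hrank : P.coRank ℓ w ≤ t :=
      Nat.sInf_le (show w ∉ P.nuStage ℓ (P.coAcc (ℓ + 1) w) t from hacc ▸ hw)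
    rw [coCode_of_lt h, hcode]
    exact ⟨by omega, fun he => ⟨hacc, by omega⟩⟩

theorem coCode_le_and_coAcc_eq_of_notMem_nest_coAcc (hv : v ∉ P.win) (hℓ : ℓ ≤ P.K) :
    ∀ w ∉ P.nest ℓ (P.coAcc ℓ v),
      P.coCode ℓ w ≤ P.coCode ℓ v ∧ (P.coCode ℓ w = P.coCode ℓ v → P.coAcc ℓ w = P.coAcc ℓ v) := by
  induction hℓ using Nat.decreasingInduction with
  | self => intro w _; simp [coCode, lexCode_of_le, coAcc_of_le]
  | of_succ ℓ h ih =>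
    intro w hw
    rw [nest_coAcc_eq_nuStage_coRank h (notMem_nest_coAcc hv h)] at hw
    obtain ⟨hle, heq⟩ := coCode_le_of_notMem_nuStage h ih hw
    rw [coCode_of_lt h (v := v)]
    refine ⟨hle, fun he => ?_⟩
    obtain ⟨hacc, hrank⟩ := heq he
    rw [coAcc_of_lt h, coAcc_of_lt h, hacc, escapeSet, escapeSet, hacc, hrank]

theorem coCode_le_of_notMem_nest_coAcc (hv : v ∉ P.win) (hℓ : ℓ ≤ P.K)
    (hw : w ∉ P.nest ℓ (P.coAcc ℓ v)) : P.coCode ℓ w ≤ P.coCode ℓ v :=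
  (coCode_le_and_coAcc_eq_of_notMem_nest_coAcc hv hℓ w hw).1

theorem coCode_lt_of_notMem_escapeSet (hv : v ∉ P.win) (h : ℓ < P.K)
    (hw : w ∉ P.escapeSet ℓ v) : P.coCode ℓ w < P.coCode ℓ v := by
  have hle := (coCode_le_of_notMem_nuStage h
    (coCode_le_and_coAcc_eq_of_notMem_nest_coAcc hv h) hw).1
  have := coRank_pos (notMem_nest_coAcc hv h)
  rw [coCode_of_lt h (v := v)]
  omega

theorem coCode_le_coCode_of_le {ℓ' : ℕ} (hℓ : ℓ ≤ ℓ') (hle : P.coCode ℓ w ≤ P.coCode ℓ v) :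
    P.coCode ℓ' w ≤ P.coCode ℓ' v :=
  lexCode_le_of_le_of_le (fun _ => coRank_le_card) hℓ hle

end RabinGame

namespace RabinGame

open Set LiveGameGraph Classical

variable {V : Type*} (P : RabinGame V)

/-- Player 1 has to act on the pair `ℓ + 1` at `v`: the pair is not excluded by `R`, and `v`
either meets `G` or has a live edge into the least fixpoint in `X_{ℓ+1}`. -/
def Needs (ℓ : ℕ) (v : V) : Prop :=
  v ∉ P.R (ℓ + 1) ∧ (v ∈ P.G (ℓ + 1) ∨ v ∈ P.lpre (P.nest ℓ (P.coAcc ℓ v)))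

def HasNeed (v : V) : Prop := ∃ ℓ < P.K, P.Needs ℓ v

noncomputable def topNeed (v : V) : ℕ := sSup {ℓ | ℓ < P.K ∧ P.Needs ℓ v}

/-- The levels at which a move of Player 1 from `v` is harmless: relevant pairs above all needs. -/
def guardLevels (v : V) : Set ℕ :=
  {ℓ | ℓ < P.K ∧ v ∉ P.R (ℓ + 1) ∧ (v ∈ P.V1 → P.HasNeed v → P.topNeed v < ℓ)}

noncomputable def guard (v : V) : ℕ := sInf (P.guardLevels v)

variable {P} {ℓ : ℕ} {v w : V}

theorem topNeed_lt_and_needs (h : P.HasNeed v) : P.topNeed v < P.K ∧ P.Needs (P.topNeed v) v :=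
  Nat.sSup_mem h ⟨P.K, fun _ hx => hx.1.le⟩

theorem le_topNeed (hℓ : ℓ < P.K) (h : P.Needs ℓ v) : ℓ ≤ P.topNeed v :=
  le_csSup ⟨P.K, fun _ hx => hx.1.le⟩ ⟨hℓ, h⟩

theorem guard_mem (h : (P.guardLevels v).Nonempty) : P.guard v ∈ P.guardLevels v :=
  Nat.sInf_mem h

theorem guard_le (h : ℓ ∈ P.guardLevels v) : P.guard v ≤ ℓ := Nat.sInf_le h

theorem guardLevels_nonempty (hRK : P.R P.K = ∅) (hK : 1 ≤ P.K)
    (h : ¬(v ∈ P.V1 ∧ P.HasNeed v ∧ P.topNeed v + 1 = P.K)) : (P.guardLevels v).Nonempty := by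
  refine ⟨P.K - 1, by omega, by rw [Nat.sub_add_cancel hK, hRK]; exact notMem_empty v,
    fun h1 hn => ?_⟩
  have := (topNeed_lt_and_needs hn).1
  have : P.topNeed v + 1 ≠ P.K := fun he => h ⟨h1, hn, he⟩
  omega

theorem not_needs_of_mem_guardLevels (h1 : v ∈ P.V1) (h : ℓ ∈ P.guardLevels v) :
    ¬P.Needs ℓ v := fun hn =>
  (h.2.2 h1 ⟨ℓ, h.1, hn⟩).not_ge (le_topNeed h.1 hn)

section Fintype

variable [Fintype V]

theorem exists_edge_notMem_escapeSet (hv : v ∉ P.win) (h1 : v ∈ P.V1) (hn : P.HasNeed v) :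
    ∃ w, P.E v w ∧ w ∉ P.escapeSet (P.topNeed v) v := by
  obtain ⟨hlt, hR, hneed⟩ := topNeed_lt_and_needs hn
  refine exists_edge_notMem_of_notMem_pre1 h1 fun hpre => notMem_cTerm_coAcc hv hlt ?_
  refine mem_cTerm.2 ⟨hR, ?_⟩
  rcases hneed with hG | hl
  · exact Or.inl ⟨hG, Or.inr hpre⟩
  · exact Or.inr (Or.inr ⟨hl, hpre⟩)

theorem exists_edge_notMem_nest_coAcc (hv : v ∉ P.win) (h1 : v ∈ P.V1) (hℓ : ℓ < P.K)
    (hR : v ∉ P.R (ℓ + 1)) : ∃ w, P.E v w ∧ w ∉ P.nest ℓ (P.coAcc ℓ v) :=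
  exists_edge_notMem_of_notMem_pre1 h1 fun hpre =>
    notMem_cTerm_coAcc hv hℓ (mem_cTerm.2 ⟨hR, Or.inr (Or.inl (Or.inr hpre))⟩)

theorem notMem_nest_coAcc_of_edge (hv : v ∉ P.win) (h0 : v ∈ P.V0) (hℓ : ℓ < P.K)
    (hR : v ∉ P.R (ℓ + 1)) (he : P.E v w) : w ∉ P.nest ℓ (P.coAcc ℓ v) :=
  notMem_of_notMem_pre0 h0 (fun hpre =>
    notMem_cTerm_coAcc hv hℓ (mem_cTerm.2 ⟨hR, Or.inr (Or.inl (Or.inl hpre))⟩)) he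

theorem notMem_escapeSet_of_edge (hv : v ∉ P.win) (h0 : v ∈ P.V0) (hℓ : ℓ < P.K)
    (hR : v ∉ P.R (ℓ + 1)) (hG : v ∈ P.G (ℓ + 1)) (he : P.E v w) : w ∉ P.escapeSet ℓ v :=
  notMem_of_notMem_pre0 h0 (fun hpre =>
    notMem_cTerm_coAcc hv hℓ (mem_cTerm.2 ⟨hR, Or.inl ⟨hG, Or.inl hpre⟩⟩)) he

end Fintype

variable (P)

noncomputable def escapeMove (v : V) : V := P.moveOutside v (P.escapeSet (P.topNeed v) v)

noncomputable def plainMove (v : V) : V :=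
  P.moveOutside v (P.nest (P.guard v) (P.coAcc (P.guard v) v))

noncomputable def liveMove [Fintype V] (v : V) (m : ℕ) : V :=
  if P.El v (roundRobin v m) then roundRobin v m else P.plainMove v

/-- Player 1's move at the `n`-th visit to `v`: when `v` has a need, every other visit escapes
from the greatest fixpoint of the top need (every visit, if no guard level is left above it);
the remaining visits cycle through the live edges. -/
noncomputable def spoilMove [Fintype V] (v : V) (n : ℕ) : V :=
  if P.HasNeed v ∧ (n % 2 = 0 ∨ P.topNeed v + 1 = P.K) then P.escapeMove v
  else P.liveMove v (n / 2)

noncomputable def spoiler [Fintype V] : List V → V → V := fun h v => P.spoilMove v (h.count v)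

/-- A step from `v` to `w` leaves the greatest fixpoint of the top need of `v`, or the least
fixpoint of the guard level of `v`. -/
def Escapes (v w : V) : Prop :=
  (v ∈ P.V1 ∧ P.HasNeed v ∧ w ∉ P.escapeSet (P.topNeed v) v) ∨
    ((P.guardLevels v).Nonempty ∧ w ∉ P.nest (P.guard v) (P.coAcc (P.guard v) v))

variable {P}

theorem notMem_win_of_escapes (h : P.Escapes v w) : w ∉ P.win := by
  rcases h with ⟨-, hn, hw⟩ | ⟨hne, hw⟩
  · exact fun hwin => hw (win_subset_escapeSet (topNeed_lt_and_needs hn).1 hwin)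
  · exact fun hwin => hw (win_subset_nest_coAcc (guard_mem hne).1.le hwin)

theorem edge_spoilMove [Fintype V] (v : V) (n : ℕ) : P.E v (P.spoilMove v n) := by
  unfold spoilMove liveMove escapeMove plainMove
  split_ifs with _ hl
  · exact P.edge_moveOutside _ _
  · exact (P.live_sub _ _ hl).2
  · exact P.edge_moveOutside _ _

theorem strategy1_spoiler [Fintype V] : P.Strategy1 P.spoiler :=
  fun _ v _ => edge_spoilMove v _

variable [Fintype V]

theorem escapes_of_mem_V0 (hRK : P.R P.K = ∅) (hK : 1 ≤ P.K) (hv : v ∉ P.win) (h0 : v ∈ P.V0)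
    (he : P.E v w) : P.Escapes v w := by
  have hne := guardLevels_nonempty hRK hK fun h => P.mem_V1_iff.1 h.1 h0
  obtain ⟨hlt, hR, -⟩ := guard_mem hne
  exact Or.inr ⟨hne, notMem_nest_coAcc_of_edge hv h0 hlt hR he⟩

theorem escapes_spoilMove (hRK : P.R P.K = ∅) (hK : 1 ≤ P.K) (hv : v ∉ P.win) (h1 : v ∈ P.V1)
    (n : ℕ) : P.Escapes v (P.spoilMove v n) := by
  unfold spoilMove
  split_ifs with hesc
  · exact Or.inl ⟨h1, hesc.1,
      P.moveOutside_notMem (exists_edge_notMem_escapeSet hv h1 hesc.1)⟩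
  · have hne := guardLevels_nonempty hRK hK fun h => hesc ⟨h.2.1, Or.inr h.2.2⟩
    obtain ⟨hlt, hR, -⟩ := guard_mem hne
    refine Or.inr ⟨hne, ?_⟩
    unfold liveMove
    split_ifs with hl
    · exact fun hmem => not_needs_of_mem_guardLevels h1 (guard_mem hne) ⟨hR, Or.inr ⟨_, hl, hmem⟩⟩
    · exact P.moveOutside_notMem (exists_edge_notMem_nest_coAcc hv h1 hlt hR)

theorem coCode_le_of_escapes (hv : v ∉ P.win) (h : P.Escapes v w) {j : ℕ}
    (hj : j ∈ P.guardLevels v ∨ j + 1 = P.K) : P.coCode j w ≤ P.coCode j v := by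
  rcases h with ⟨h1, hn, hw⟩ | ⟨hne, hw⟩
  · have hlt := (topNeed_lt_and_needs hn).1
    have hle : P.topNeed v ≤ j := by
      rcases hj with hj | hj
      · exact (hj.2.2 h1 hn).le
      · omega
    exact coCode_le_coCode_of_le hle (coCode_lt_of_notMem_escapeSet hv hlt hw).le
  · have hmem := guard_mem hne
    have hle : P.guard v ≤ j := by
      rcases hj with hj | hj
      · exact guard_le hj
      · have := hmem.1; omega
    exact coCode_le_coCode_of_le hle (coCode_le_of_notMem_nest_coAcc hv hmem.1.le hw)

end RabinGame

namespace RabinGame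

open Set LiveGameGraph

variable {V : Type*} [Fintype V] {P : RabinGame V} {π : ℕ → V}

variable (P) in
def IsSpoilingPlay (π : ℕ → V) : Prop :=
  π 0 ∉ P.win ∧ (∀ i, π i ∈ P.V0 → P.E (π i) (π (i + 1))) ∧
    ∀ i, π i ∈ P.V1 → π (i + 1) = P.spoilMove (π i) (visitCount π (π i) i)

theorem isSpoilingPlay_play {ρ0 : List V → V → V} (hρ0 : P.Strategy0 ρ0) {v0 : V}
    (hv0 : v0 ∉ P.win) : P.IsSpoilingPlay (P.play ρ0 P.spoiler v0) :=
  ⟨hv0, fun i h0 => ((P.compliant_play ρ0 P.spoiler v0).2 i).1 h0 ▸ hρ0 _ _ h0,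
    fun i h1 => ((P.compliant_play ρ0 P.spoiler v0).2 i).2 h1⟩

theorem notMem_win_and_escapes (hRK : P.R P.K = ∅) (hK : 1 ≤ P.K) (hπ : P.IsSpoilingPlay π)
    (i : ℕ) : π i ∉ P.win ∧ P.Escapes (π i) (π (i + 1)) := by
  have hstep : ∀ i, π i ∉ P.win → P.Escapes (π i) (π (i + 1)) := by
    intro i hi
    by_cases h0 : π i ∈ P.V0
    · exact escapes_of_mem_V0 hRK hK hi h0 (hπ.2.1 i h0)
    · have h1 := P.mem_V1_iff.2 h0
      exact hπ.2.2 i h1 ▸ escapes_spoilMove hRK hK hi h1 _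
  have hout : ∀ i, π i ∉ P.win := by
    intro i
    induction i with
    | zero => exact hπ.1
    | succ i ih => exact notMem_win_of_escapes (hstep i ih)
  exact ⟨hout i, hstep i (hout i)⟩

theorem exists_ge_escape (hπ : P.IsSpoilingPlay π) (hout : ∀ i, π i ∉ P.win) {w : V}
    (hw : w ∈ infVisited π) (h1 : w ∈ P.V1) (hn : P.HasNeed w) (N : ℕ) :
    ∃ i ≥ N, π i = w ∧ π (i + 1) ∉ P.escapeSet (P.topNeed w) w := by
  obtain ⟨i, hi, rfl, heven⟩ := exists_visit_with_visitCount_mem hw (C := {n | n % 2 = 0})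
    (fun N => ⟨2 * N, by omega, by simp⟩) N
  refine ⟨i, hi, rfl, ?_⟩
  rw [hπ.2.2 i h1, spoilMove, if_pos ⟨hn, Or.inl heven⟩]
  exact P.moveOutside_notMem (exists_edge_notMem_escapeSet (hout i) h1 hn)

theorem not_isMinOn_coCode_topNeed (hπ : P.IsSpoilingPlay π)
    (hesc : ∀ i, π i ∉ P.win ∧ P.Escapes (π i) (π (i + 1))) {w : V}
    (hw : w ∈ infVisited π) (h1 : w ∈ P.V1) (hn : P.HasNeed w) :
    ¬IsMinOn (P.coCode (P.topNeed w)) (infVisited π) w := by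
  intro hmin
  obtain ⟨N, hN⟩ := exists_forall_ge_mem_infVisited (π := π)
  obtain ⟨i, hi, rfl, hout⟩ := exists_ge_escape hπ (fun i => (hesc i).1) hw h1 hn N
  exact (isMinOn_iff.1 hmin _ (hN (i + 1) (by omega))).not_gt
    (coCode_lt_of_notMem_escapeSet (hesc i).1 (topNeed_lt_and_needs hn).1 hout)

theorem not_isMinOn_coCode_of_mem_G (hπ : P.IsSpoilingPlay π)
    (hesc : ∀ i, π i ∉ P.win ∧ P.Escapes (π i) (π (i + 1))) {w : V} {j : ℕ}
    (hw : w ∈ infVisited π) (h0 : w ∈ P.V0) (hj : j < P.K) (hR : w ∉ P.R (j + 1))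
    (hG : w ∈ P.G (j + 1)) : ¬IsMinOn (P.coCode j) (infVisited π) w := by
  intro hmin
  obtain ⟨N, hN⟩ := exists_forall_ge_mem_infVisited (π := π)
  obtain ⟨i, hi, rfl⟩ := exists_ge_of_mem_infVisited hw N
  exact (isMinOn_iff.1 hmin _ (hN (i + 1) (by omega))).not_gt
    (coCode_lt_of_notMem_escapeSet (hesc i).1 hj
      (notMem_escapeSet_of_edge (hesc i).1 h0 hj hR hG (hπ.2.1 i h0)))

/-- No step increases the code at the top level, so a vertex whose top need is at the top level
is visited only finitely often. -/
theorem topNeed_add_one_ne (hK : 1 ≤ P.K) (hπ : P.IsSpoilingPlay π)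
    (hesc : ∀ i, π i ∉ P.win ∧ P.Escapes (π i) (π (i + 1))) {w : V}
    (hw : w ∈ infVisited π) (h1 : w ∈ P.V1) (hn : P.HasNeed w) : P.topNeed w + 1 ≠ P.K := by
  intro htop
  have hall := isMinOn_infVisited_of_step_le (P.coCode (P.K - 1)) fun i _ _ =>
    coCode_le_of_escapes (hesc i).1 (hesc i).2 (Or.inr (by omega))
  rw [show P.K - 1 = P.topNeed w by omega] at hall
  exact not_isMinOn_coCode_topNeed hπ hesc hw h1 hn (hall w hw)

theorem stronglyFair_of_isSpoilingPlay (hK : 1 ≤ P.K) (hπ : P.IsSpoilingPlay π)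
    (hesc : ∀ i, π i ∉ P.win ∧ P.Escapes (π i) (π (i + 1))) : P.StronglyFair π := by
  intro v w hl hv
  have h1 := (P.live_sub v w hl).1
  have hlive : ¬(P.HasNeed v ∧ P.topNeed v + 1 = P.K) := fun h =>
    topNeed_add_one_ne hK hπ hesc hv h1 h.1 h.2
  refine infinite_setOf_iff_forall_exists_ge.2 fun N => ?_
  have hC : ∀ N, ∃ n ≥ N, n ∈ {n | n % 2 = 1 ∧ roundRobin v (n / 2) = w} := fun N => by
    obtain ⟨m, hm, hmw⟩ := exists_ge_roundRobin_eq v w N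
    exact ⟨2 * m + 1, by omega, by omega, by rwa [show (2 * m + 1) / 2 = m by omega]⟩
  obtain ⟨i, hi, rfl, hodd, hrr⟩ := exists_visit_with_visitCount_mem hv hC N
  refine ⟨i, hi, rfl, ?_⟩
  rw [hπ.2.2 i h1, spoilMove, if_neg fun h => h.2.elim (by omega) fun h' => hlive ⟨h.1, h'⟩,
    liveMove, hrr, if_pos (hrr ▸ hl)]

/-- The code at level `j` is constant on the infinitely visited vertices, while a need at level
`j + 1` would decrease it infinitely often. -/
theorem not_needs_of_forall_notMem_R (hπ : P.IsSpoilingPlay π)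
    (hesc : ∀ i, π i ∉ P.win ∧ P.Escapes (π i) (π (i + 1))) {j : ℕ} (hj : j < P.K)
    (habove : ∀ w ∈ infVisited π, ∀ m, j < m → m < P.K → ¬P.Needs m w)
    (hR : ∀ w ∈ infVisited π, w ∉ P.R (j + 1)) : ∀ w ∈ infVisited π, ¬P.Needs j w := by
  have htop : ∀ w ∈ infVisited π, IsMinOn (P.coCode j) (infVisited π) w → w ∈ P.V1 →
      P.HasNeed w → P.topNeed w < j := by
    intro w hw hmin h1 hn
    obtain ⟨hlt, hneeds⟩ := topNeed_lt_and_needs hn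
    rcases lt_trichotomy (P.topNeed w) j with h | h | h
    · exact h
    · exact absurd (h ▸ hmin) (not_isMinOn_coCode_topNeed hπ hesc hw h1 hn)
    · exact absurd hneeds (habove w hw _ h hlt)
  have hall := isMinOn_infVisited_of_step_le (P.coCode j) fun i hi hmin =>
    coCode_le_of_escapes (hesc i).1 (hesc i).2 (Or.inl ⟨hj, hR _ hi, htop _ hi hmin⟩)
  intro w hw hneeds
  by_cases h0 : w ∈ P.V0
  · rcases hneeds.2 with hG | hl
    · exact not_isMinOn_coCode_of_mem_G hπ hesc hw h0 hj (hR w hw) hG (hall w hw)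
    · exact P.notMem_lpre_of_mem_V0 h0 _ hl
  · exact (htop w hw (hall w hw) (P.mem_V1_iff.2 h0) ⟨j, hj, hneeds⟩).not_ge
      (le_topNeed hj hneeds)

theorem exists_level_R_infVisited (hπ : P.IsSpoilingPlay π)
    (hesc : ∀ i, π i ∉ P.win ∧ P.Escapes (π i) (π (i + 1))) :
    ∃ js ≤ P.K, (∀ m, js ≤ m → m < P.K → ∀ w ∈ infVisited π, w ∉ P.G (m + 1)) ∧
      (1 ≤ js → ∃ x ∈ infVisited π, x ∈ P.R js) := by
  suffices h : ∀ j ≤ P.K, (∀ w ∈ infVisited π, ∀ m, j ≤ m → m < P.K →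
      w ∉ P.R (m + 1) ∧ ¬P.Needs m w) →
      ∃ js ≤ j, (∀ m, js ≤ m → m < P.K → ∀ w ∈ infVisited π, w ∉ P.G (m + 1)) ∧
        (1 ≤ js → ∃ x ∈ infVisited π, x ∈ P.R js) by
    obtain ⟨js, hjs, hrest⟩ := h P.K le_rfl fun _ _ m hm hmK => absurd hmK (by omega)
    exact ⟨js, hjs, hrest⟩
  have hGfree : ∀ j, (∀ w ∈ infVisited π, ∀ m, j ≤ m → m < P.K →
      w ∉ P.R (m + 1) ∧ ¬P.Needs m w) →
      ∀ m, j ≤ m → m < P.K → ∀ w ∈ infVisited π, w ∉ P.G (m + 1) :=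
    fun j hclean m hm hmK w hw hG => (hclean w hw m hm hmK).2 ⟨(hclean w hw m hm hmK).1, Or.inl hG⟩
  intro j hjK hclean
  induction j with
  | zero => exact ⟨0, le_rfl, hGfree 0 hclean, by omega⟩
  | succ j ih =>
    by_cases hhit : ∃ x ∈ infVisited π, x ∈ P.R (j + 1)
    · exact ⟨j + 1, le_rfl, hGfree _ hclean, fun _ => hhit⟩
    · push Not at hhit
      have hneeds := not_needs_of_forall_notMem_R hπ hesc (by omega)
        (fun w hw m hm hmK => (hclean w hw m hm hmK).2) hhit
      obtain ⟨js, hjs, hrest⟩ := ih (by omega) fun w hw m hm hmK => by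
        rcases hm.eq_or_lt with rfl | hm
        · exact ⟨hhit w hw, hneeds w hw⟩
        · exact hclean w hw m hm hmK
      exact ⟨js, by omega, hrest⟩

theorem not_rabin_of_isSpoilingPlay (hRK : P.R P.K = ∅) (hK : 1 ≤ P.K)
    (hR : AntitoneOn P.R (Ico 1 P.K)) (hπ : P.IsSpoilingPlay π) : ¬P.rabin π := by
  have hesc := notMem_win_and_escapes hRK hK hπ
  rintro ⟨p, hp, ⟨N, hN⟩, hG⟩
  obtain ⟨hp1, hpK⟩ := Finset.mem_Ico.1 hp
  obtain ⟨js, hjsK, hfree, hhit⟩ := exists_level_R_infVisited hπ hesc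
  obtain ⟨Nt, hNt⟩ := exists_forall_ge_mem_infVisited (π := π)
  by_cases hjs : js < p
  · obtain ⟨i, hi, hiG⟩ := hG Nt
    exact hfree (p - 1) (by omega) (by omega) _ (hNt i hi) (by rwa [Nat.sub_add_cancel hp1])
  · obtain ⟨x, hx, hxR⟩ := hhit (by omega)
    have hjsK' : js < P.K := hjsK.lt_of_ne fun h => by rw [h, hRK] at hxR; exact hxR
    obtain ⟨i, hi, rfl⟩ := exists_ge_of_mem_infVisited hx N
    exact hN i hi (hR ⟨hp1, hpK⟩ ⟨by omega, hjsK'⟩ (by omega) hxR)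

end RabinGame

namespace RabinGame

open Set LiveGameGraph

variable {V : Type*} [Fintype V] {P : RabinGame V}

theorem winsFrom_strategy (hGK : P.G P.K = ∅) (hR : AntitoneOn P.R (Ico 1 P.K)) {v0 : V}
    (hv0 : v0 ∈ P.win) : P.WinsFrom P.rabin (fun _ v => P.strategy v) v0 :=
  ⟨fun _ v _ => strategy_edge v, fun _ hρ1 _ hπ hfair =>
    rabin_of_compliant_strategy hGK hR hρ1 hv0 hπ hfair⟩

theorem notMem_winningRegion (hRK : P.R P.K = ∅) (hK : 1 ≤ P.K)
    (hR : AntitoneOn P.R (Ico 1 P.K)) {v0 : V} (hv0 : v0 ∉ P.win) :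
    v0 ∉ P.WinningRegion P.rabin := by
  rintro ⟨ρ0, hρ0, hwin⟩
  have hπ := isSpoilingPlay_play hρ0 hv0
  exact not_rabin_of_isSpoilingPlay hRK hK hR hπ (hwin _ strategy1_spoiler _
    (P.compliant_play ..) (stronglyFair_of_isSpoilingPlay hK hπ (notMem_win_and_escapes hRK hK hπ)))

theorem win_eq_winningRegion (hGK : P.G P.K = ∅) (hRK : P.R P.K = ∅) (hK : 1 ≤ P.K)
    (hR : AntitoneOn P.R (Ico 1 P.K)) : P.win = P.WinningRegion P.rabin :=
  Subset.antisymm (fun _ hv0 => ⟨_, winsFrom_strategy hGK hR hv0⟩) fun _ hv0 =>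
    by_contra fun h => notMem_winningRegion hRK hK hR h hv0

end RabinGame

theorem antitoneOn_Icc_of_succ_subset {V : Type*} {s : ℕ → Set V} {a b : ℕ}
    (h : ∀ j, a ≤ j → j < b → s (j + 1) ⊆ s j) : AntitoneOn s (Set.Icc a b) := by
  intro i hi j hj hij
  induction j, hij using Nat.le_induction with
  | base => exact le_rfl
  | succ m hm ih =>
    obtain ⟨-, hjb⟩ := hj
    exact (h m (hi.1.trans hm) hjb).trans (ih ⟨hi.1.trans hm, by omega⟩)

theorem LiveGameGraph.chainAux_congr {V : Type*} (Gm : LiveGameGraph V) {g r g' r' : ℕ → Set V}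
    {j : ℕ} (hg : Set.EqOn g g' (Set.Icc 1 j)) (hr : Set.EqOn r r' (Set.Icc 1 j)) (acc : Set V) :
    Gm.chainAux g r j acc = Gm.chainAux g' r' j acc := by
  induction j generalizing acc with
  | zero => rfl
  | succ j ih =>
    have hmono : Set.Icc 1 j ⊆ Set.Icc 1 (j + 1) := Set.Icc_subset_Icc_right j.le_succ
    simp only [chainAux, hg ⟨j.succ_pos, le_rfl⟩, hr ⟨j.succ_pos, le_rfl⟩,
      ih (hg.mono hmono) (hr.mono hmono)]

namespace RabinGame

variable {V : Type*}

/-- The pairs `(Gp m, Rp m)` for `1 ≤ m ≤ k`, followed by the artificial pair `(∅, ∅)` at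
`k + 1`, which plays the role of the outermost pair `(G_0, R_0)` of the chain fixpoint. -/
def ofChain (Gm : LiveGameGraph V) (Gp Rp : ℕ → Set V) (k : ℕ) : RabinGame V where
  toLiveGameGraph := Gm
  G m := if m = k + 1 then ∅ else Gp m
  R m := if m = k + 1 then ∅ else Rp m
  K := k + 1

variable (Gm : LiveGameGraph V) (Gp Rp : ℕ → Set V) (k : ℕ)

theorem chainZ_eq_win_ofChain : Gm.chainZ Gp Rp k = (ofChain Gm Gp Rp k).win := by
  have hpad : ∀ s : ℕ → Set V, Set.EqOn s (fun m => if m = k + 1 then ∅ else s m) (Set.Icc 1 k) :=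
    fun s m hm => (if_neg (by have := hm.2; omega)).symm
  simp only [LiveGameGraph.chainZ, win, nest, ofChain, LiveGameGraph.chainAux, if_true,
    Set.compl_empty, Set.univ_inter, Set.empty_inter, Set.empty_union,
    Gm.chainAux_congr (hpad Gp) (hpad Rp)]

theorem ofChain_G_K : (ofChain Gm Gp Rp k).G (ofChain Gm Gp Rp k).K = ∅ := if_pos rfl

theorem ofChain_R_K : (ofChain Gm Gp Rp k).R (ofChain Gm Gp Rp k).K = ∅ := if_pos rfl

theorem antitoneOn_ofChain_R (hchainR : ∀ j, 1 ≤ j → j < k → Rp (j + 1) ⊆ Rp j) :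
    AntitoneOn (ofChain Gm Gp Rp k).R (Set.Ico 1 (ofChain Gm Gp Rp k).K) := by
  rw [show (ofChain Gm Gp Rp k).K = k + 1 from rfl, Set.Ico_add_one_right_eq_Icc]
  exact (antitoneOn_Icc_of_succ_subset hchainR).congr fun m hm =>
    (if_neg (by have := hm.2; omega)).symm

theorem rabin_ofChain :
    (ofChain Gm Gp Rp k).rabin = fun π => ∃ j ∈ Finset.Icc 1 k,
      (∃ N, ∀ i ≥ N, π i ∉ Rp j) ∧ ∀ N, ∃ i ≥ N, π i ∈ Gp j := by
  funext π
  simp only [rabin, ofChain, Finset.mem_Ico, Finset.mem_Icc]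
  refine propext (exists_congr fun j => ?_)
  by_cases hj : j = k + 1
  · simp [hj]
  · simp only [if_neg hj, Nat.lt_succ_iff]

end RabinGame

theorem fair_adversarial_rabin_chain_general {V : Type*} [Fintype V]
    (Gm : LiveGameGraph V) (k : ℕ) (Gp Rp : ℕ → Set V)
    (hchainR : ∀ j, 1 ≤ j → j < k → Rp (j + 1) ⊆ Rp j)
    (Zstar : Set V) (hZ : Zstar = Gm.chainZ Gp Rp k) :
    Zstar = Gm.WinningRegion
        (fun π => ∃ j ∈ Finset.Icc 1 k,
          (∃ N, ∀ i ≥ N, π i ∉ Rp j) ∧ (∀ N, ∃ i ≥ N, π i ∈ Gp j)) ∧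
    ∃ σ : V → V, (∀ v ∈ Gm.V0, Gm.E v (σ v)) ∧
      ∀ v0 ∈ Zstar,
        Gm.WinsFrom
          (fun π => ∃ j ∈ Finset.Icc 1 k,
            (∃ N, ∀ i ≥ N, π i ∉ Rp j) ∧ (∀ N, ∃ i ≥ N, π i ∈ Gp j))
          (fun _ v => σ v) v0 := by
  open RabinGame in
  rw [← rabin_ofChain, hZ, chainZ_eq_win_ofChain]
  have hR := antitoneOn_ofChain_R Gm Gp Rp k hchainR
  exact ⟨win_eq_winningRegion (ofChain_G_K ..) (ofChain_R_K ..) k.succ_pos hR, strategy _,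
    fun v _ => strategy_edge (P := ofChain Gm Gp Rp k) v,
    fun _ => winsFrom_strategy (ofChain_G_K ..) hR⟩

/-- for a Rabin chain condition, the chain fixpoint equals the
winning region of Player 0 in the fair adversarial Rabin game, and a memoryless
winning Player-0 strategy exists on it. -/
theorem fair_adversarial_rabin_chain {V : Type*} [Fintype V]
    (Gm : LiveGameGraph V) (k : ℕ) (Gp Rp : ℕ → Set V)
    (hchainR : ∀ j, 1 ≤ j → j < k → Rp (j + 1) ⊆ Rp j)
    (hchainG : ∀ j, 1 ≤ j → j < k → Gp (j + 1) ⊆ Gp j)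
    (Zstar : Set V) (hZ : Zstar = Gm.chainZ Gp Rp k) :
    Zstar = Gm.WinningRegion
        (fun π => ∃ j ∈ Finset.Icc 1 k,
          (∃ N, ∀ i ≥ N, π i ∉ Rp j) ∧ (∀ N, ∃ i ≥ N, π i ∈ Gp j)) ∧
    ∃ σ : V → V, (∀ v ∈ Gm.V0, Gm.E v (σ v)) ∧
      ∀ v0 ∈ Zstar,
        Gm.WinsFrom
          (fun π => ∃ j ∈ Finset.Icc 1 k,
            (∃ N, ∀ i ≥ N, π i ∉ Rp j) ∧ (∀ N, ∃ i ≥ N, π i ∈ Gp j))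
          (fun _ v => σ v) v0 :=
  fair_adversarial_rabin_chain_general Gm k Gp Rp hchainR Zstar hZ
end
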